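/- arXiv:1205.4603 — 6 statements merged into one kernel-verified Lean document; each statement's English description precedes it below -/
import Mathlib

section
/- Let p ≥ 3 be a prime and let 3 ≤ r < s be integers with (r-1) dividing (s-1), so that q = (s-1)/(r-1) is a positive integer. If a ∈ A(s,r) satisfies h_p(a) = min h_p, then a = δ^{-1}(q, q, …, q), i.e. a = (0, q, 2q, …, (r-1)q) is the arithmetic progression with common difference q. -/
/-- `A(s,r)`: admissible exponent tuples, viewed as functions `ℕ → ℤ` whose relevant
entries are indices `0,…,r-1`: strictly increasing with `a 0 = 0` and `a (r-1) = s-1`. -/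
def Admissible (s r : ℕ) (a : ℕ → ℤ) : Prop :=
  a 0 = 0 ∧ a (r - 1) = (s : ℤ) - 1 ∧ ∀ i, i + 1 < r → a i < a (i + 1)

/-- `h_p(x) = Σ_{k<i≤r} p^{-(x_i - x_k)}` (indices `0,…,r-1`). -/
noncomputable def hp (p r : ℕ) (a : ℕ → ℤ) : ℝ :=
  ∑ k ∈ Finset.range r, ∑ i ∈ Finset.range r,
    if k < i then (p : ℝ) ^ (a k - a i) else 0

/-- `a` is admissible and attains `min h_p` over `A(s,r)`. -/
def IsMinimizer (p s r : ℕ) (a : ℕ → ℤ) : Prop :=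
  Admissible s r a ∧ ∀ b : ℕ → ℤ, Admissible s r b → hp p r a ≤ hp p r b

open Finset

private lemma hk_diff_ge {r : ℕ} {a : ℕ → ℤ} (hstep : ∀ i, i + 1 < r → a i < a (i + 1)) :
    ∀ u v : ℕ, u ≤ v → v < r → (v : ℤ) - (u : ℤ) ≤ a v - a u := by
  intro u v huv
  induction v, huv using Nat.le_induction with
  | base => intro _; simp
  | succ n hn ih =>
    intro h
    have h1 := ih (by omega)
    have h2 := hstep n (by omega)
    push_cast
    omega

private lemma hk_geom_le {x : ℝ} (h0 : 0 ≤ x) (h1 : x < 1) (n : ℕ) :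
    ∑ t ∈ range n, x ^ t ≤ (1 - x)⁻¹ := by
  have hx : 0 < 1 - x := by linarith
  rw [← one_div, le_div_iff₀ hx]
  have h := geom_sum_mul x n
  have hpn : 0 ≤ x ^ n := pow_nonneg h0 n
  have h2 : (∑ t ∈ range n, x ^ t) * (1 - x) = 1 - x ^ n := by linear_combination -h
  linarith

private lemma hk_SR_bound {p r : ℕ} {a : ℕ → ℤ} (hP : 3 ≤ (p : ℝ))
    (hmono : ∀ u v : ℕ, u ≤ v → v < r → (v : ℤ) - (u : ℤ) ≤ a v - a u)
    {g : ℕ} (hg : g + 1 < r) :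
    ∑ k ∈ range r, ∑ i ∈ range r, (if k ≤ g ∧ g < i then (p : ℝ) ^ (a k - a i) else 0)
      ≤ (1 - (p:ℝ)⁻¹)⁻¹ * ((p : ℝ) ^ (a g - a (g + 1)) * (1 - (p:ℝ)⁻¹)⁻¹) := by
  have hP0 : (0:ℝ) < p := by linarith
  have hP1 : (1:ℝ) ≤ p := by linarith
  have hx0 : (0:ℝ) ≤ (p:ℝ)⁻¹ := by positivity
  have hx1 : (p:ℝ)⁻¹ < 1 := by
    rw [inv_lt_one_iff₀]; right; linarith
  have hpow : ∀ n : ℕ, (p:ℝ)⁻¹ ^ n = (p:ℝ) ^ (-(n:ℤ)) := by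
    intro n; rw [inv_pow, ← zpow_natCast, ← zpow_neg]
  have key : ∀ k ∈ range r, ∀ i ∈ range r,
      (if k ≤ g ∧ g < i then (p : ℝ) ^ (a k - a i) else 0)
        ≤ (if k ≤ g then (p:ℝ)⁻¹ ^ (g - k) else 0) *
          ((p:ℝ) ^ (a g - a (g+1)) * (if g < i then (p:ℝ)⁻¹ ^ (i - (g+1)) else 0)) := by
    intro k hk i hi
    simp only [mem_range] at hk hi
    by_cases hc : k ≤ g ∧ g < i
    · obtain ⟨h1, h2⟩ := hc
      rw [if_pos ⟨h1, h2⟩, if_pos h1, if_pos h2]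
      have m1 := hmono k g h1 (by omega)
      have m2 := hmono (g+1) i h2 (by omega)
      have hgk : ((g - k : ℕ) : ℤ) = (g:ℤ) - k := by omega
      have hig : ((i - (g+1) : ℕ) : ℤ) = (i:ℤ) - ((g:ℤ)+1) := by
        push_cast; omega
      calc (p:ℝ) ^ (a k - a i)
          ≤ (p:ℝ) ^ (-((g:ℤ) - k) + ((a g - a (g+1)) + (-((i:ℤ) - ((g:ℤ)+1))))) := by
            apply zpow_le_zpow_right₀ hP1
            push_cast at m1 m2 ⊢
            omega
        _ = (p:ℝ)⁻¹ ^ (g - k) * ((p:ℝ) ^ (a g - a (g+1)) * (p:ℝ)⁻¹ ^ (i - (g+1))) := by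
            rw [zpow_add₀ (ne_of_gt hP0), zpow_add₀ (ne_of_gt hP0), hpow, hpow, hgk, hig]
    · rw [if_neg hc]
      apply mul_nonneg
      · split_ifs <;> positivity
      · apply mul_nonneg
        · positivity
        · split_ifs <;> positivity
  refine le_trans (sum_le_sum fun k hk => sum_le_sum fun i hi => key k hk i hi) ?_
  have fact : ∑ k ∈ range r, ∑ i ∈ range r,
        ((if k ≤ g then (p:ℝ)⁻¹ ^ (g - k) else 0) *
          ((p:ℝ) ^ (a g - a (g+1)) * (if g < i then (p:ℝ)⁻¹ ^ (i - (g+1)) else 0)))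
      = (∑ k ∈ range r, if k ≤ g then (p:ℝ)⁻¹ ^ (g - k) else 0) *
          ((p:ℝ) ^ (a g - a (g+1)) * (∑ i ∈ range r, if g < i then (p:ℝ)⁻¹ ^ (i - (g+1)) else 0)) := by
    simp only [← Finset.mul_sum, ← Finset.sum_mul]
  rw [fact]
  have b1 : (∑ k ∈ range r, if k ≤ g then (p:ℝ)⁻¹ ^ (g - k) else 0) ≤ (1 - (p:ℝ)⁻¹)⁻¹ := by
    have e1 : ∑ k ∈ range r, (if k ≤ g then (p:ℝ)⁻¹ ^ (g - k) else 0)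
        = ∑ k ∈ range (g+1), (p:ℝ)⁻¹ ^ (g - k) := by
      rw [← Finset.sum_subset (Finset.range_subset_range.2 (by omega : g + 1 ≤ r))
          (fun k _ hk => if_neg (by simp at hk; omega))]
      exact Finset.sum_congr rfl fun k hk => if_pos (by simp at hk; omega)
    rw [e1]
    have h2 := Finset.sum_range_reflect (fun j => (p:ℝ)⁻¹ ^ j) (g+1)
    simp only [Nat.add_sub_cancel] at h2
    rw [h2]
    exact hk_geom_le hx0 hx1 _
  have b2 : (∑ i ∈ range r, if g < i then (p:ℝ)⁻¹ ^ (i - (g+1)) else 0) ≤ (1 - (p:ℝ)⁻¹)⁻¹ := by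
    have e1 : ∑ i ∈ range r, (if g < i then (p:ℝ)⁻¹ ^ (i - (g+1)) else 0)
        = ∑ i ∈ Ico (g+1) r, (p:ℝ)⁻¹ ^ (i - (g+1)) := by
      rw [range_eq_Ico, ← Finset.sum_Ico_consecutive _ (by omega : 0 ≤ g + 1) (by omega : g + 1 ≤ r)]
      have h1 : ∑ i ∈ Ico 0 (g+1), (if g < i then (p:ℝ)⁻¹ ^ (i - (g+1)) else 0) = 0 :=
        Finset.sum_eq_zero fun i hi => if_neg (by simp at hi; omega)
      have h2 : ∑ i ∈ Ico (g+1) r, (if g < i then (p:ℝ)⁻¹ ^ (i - (g+1)) else 0)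
          = ∑ i ∈ Ico (g+1) r, (p:ℝ)⁻¹ ^ (i - (g+1)) :=
        Finset.sum_congr rfl fun i hi => if_pos (by simp at hi; omega)
      rw [h1, h2, zero_add]
    rw [e1, Finset.sum_Ico_eq_sum_range]
    have e2 : ∀ t ∈ range (r - (g+1)), (p:ℝ)⁻¹ ^ (g + 1 + t - (g+1)) = (p:ℝ)⁻¹ ^ t := by
      intro t _; congr 1; omega
    rw [Finset.sum_congr rfl e2]
    exact hk_geom_le hx0 hx1 _
  have hA0 : (0:ℝ) ≤ ∑ k ∈ range r, (if k ≤ g then (p:ℝ)⁻¹ ^ (g - k) else 0) :=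
    Finset.sum_nonneg fun k _ => by split_ifs <;> positivity
  have hB0 : (0:ℝ) ≤ ∑ i ∈ range r, (if g < i then (p:ℝ)⁻¹ ^ (i - (g+1)) else 0) :=
    Finset.sum_nonneg fun i _ => by split_ifs <;> positivity
  have hc0 : (0:ℝ) ≤ (p:ℝ) ^ (a g - a (g+1)) := by positivity
  have hy0 : (0:ℝ) ≤ (1 - (p:ℝ)⁻¹)⁻¹ := by
    have : (0:ℝ) < 1 - (p:ℝ)⁻¹ := by linarith
    positivity
  exact mul_le_mul b1 (mul_le_mul_of_nonneg_left b2 hc0) (mul_nonneg hc0 hB0) hy0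

private lemma hk_hp_lt {p r : ℕ} {a b : ℕ → ℤ} (hP : 3 ≤ (p : ℝ))
    (hmono : ∀ u v : ℕ, u ≤ v → v < r → (v : ℤ) - (u : ℤ) ≤ a v - a u)
    {g1 g2 : ℕ} (hg1 : g1 + 1 < r) (hg2 : g2 + 1 < r)
    (hgap : a (g1 + 1) - a g1 + 2 ≤ a (g2 + 1) - a g2)
    (key : ∀ k, k < r → ∀ i, i < r →
      (if k < i then (p:ℝ) ^ (b k - b i) else 0) ≤
        (if k < i then (p:ℝ) ^ (a k - a i) else 0)
        - (if k = g1 ∧ i = g1 + 1 then (1 - (p:ℝ)⁻¹) * (p:ℝ) ^ (a g1 - a (g1+1)) else 0)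
        + ((p:ℝ) - 1) * (if k ≤ g2 ∧ g2 < i then (p:ℝ) ^ (a k - a i) else 0)) :
    hp p r b < hp p r a := by
  have hP0 : (0:ℝ) < p := by linarith
  have hx0 : (0:ℝ) < (p:ℝ)⁻¹ := by positivity
  have hx3 : (p:ℝ)⁻¹ ≤ 1/3 := by
    rw [show (1:ℝ)/3 = (3:ℝ)⁻¹ by norm_num]
    exact inv_anti₀ (by norm_num) hP
  have hy : (0:ℝ) < 1 - (p:ℝ)⁻¹ := by linarith
  set c : ℝ := (1 - (p:ℝ)⁻¹) * (p:ℝ) ^ (a g1 - a (g1+1)) with hc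
  set SR : ℝ := ∑ k ∈ range r, ∑ i ∈ range r,
      (if k ≤ g2 ∧ g2 < i then (p:ℝ) ^ (a k - a i) else 0) with hSRdef
  have hB : ∑ k ∈ range r, ∑ i ∈ range r,
      (if k = g1 ∧ i = g1 + 1 then c else 0) = c := by
    rw [Finset.sum_eq_single g1]
    · rw [Finset.sum_eq_single (g1+1)]
      · simp
      · intro i _ hne; exact if_neg (by tauto)
      · intro h; exact absurd (mem_range.2 (by omega)) h
    · intro k _ hk; exact Finset.sum_eq_zero fun i _ => if_neg (by tauto)
    · intro h; exact absurd (mem_range.2 (by omega)) h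
  have step1 : hp p r b ≤ hp p r a - c + ((p:ℝ) - 1) * SR := by
    have h1 : hp p r b ≤ ∑ k ∈ range r, ∑ i ∈ range r,
        ((if k < i then (p:ℝ) ^ (a k - a i) else 0)
          - (if k = g1 ∧ i = g1 + 1 then c else 0)
          + ((p:ℝ) - 1) * (if k ≤ g2 ∧ g2 < i then (p:ℝ) ^ (a k - a i) else 0)) := by
      unfold hp
      refine sum_le_sum fun k hk => sum_le_sum fun i hi => ?_
      simp only [mem_range] at hk hi
      exact key k hk i hi
    have h2 : ∑ k ∈ range r, ∑ i ∈ range r,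
        ((if k < i then (p:ℝ) ^ (a k - a i) else 0)
          - (if k = g1 ∧ i = g1 + 1 then c else 0)
          + ((p:ℝ) - 1) * (if k ≤ g2 ∧ g2 < i then (p:ℝ) ^ (a k - a i) else 0))
        = hp p r a - c + ((p:ℝ) - 1) * SR := by
      simp only [Finset.sum_add_distrib, Finset.sum_sub_distrib, ← Finset.mul_sum]
      rw [hB]
      rfl
    linarith [h1, h2.le, h2.ge]
  have hSRb := hk_SR_bound hP hmono hg2
  have hnum : ((p:ℝ) - 1) * ((1 - (p:ℝ)⁻¹)⁻¹ * ((p:ℝ) ^ (a g2 - a (g2+1)) * (1 - (p:ℝ)⁻¹)⁻¹)) < c := by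
    set t : ℝ := (p:ℝ) ^ (a g1 - a (g1+1)) with ht
    have ht0 : (0:ℝ) < t := by positivity
    have h2 : (p:ℝ) ^ (a g2 - a (g2+1)) ≤ t * ((p:ℝ)⁻¹ * (p:ℝ)⁻¹) := by
      have hle : (p:ℝ) ^ (a g2 - a (g2+1)) ≤ (p:ℝ) ^ (a g1 - a (g1+1) - 2) :=
        zpow_le_zpow_right₀ (by linarith) (by omega)
      have heq : (p:ℝ) ^ (a g1 - a (g1+1) - 2) = t * ((p:ℝ)⁻¹ * (p:ℝ)⁻¹) := by
        rw [ht, zpow_sub₀ (ne_of_gt hP0), zpow_two, div_eq_mul_inv, mul_inv]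
      linarith [hle, heq.le, heq.ge]
    have hPx : (p:ℝ) * (p:ℝ)⁻¹ = 1 := mul_inv_cancel₀ (ne_of_gt hP0)
    have hcube : ((p:ℝ) - 1) * ((p:ℝ)⁻¹ * (p:ℝ)⁻¹) < (1 - (p:ℝ)⁻¹)^3 := by
      nlinarith [hx0, hx3, hPx, sq_nonneg (1 - 2*(p:ℝ)⁻¹)]
    have hstep : ((p:ℝ) - 1) * ((1 - (p:ℝ)⁻¹)⁻¹ * ((p:ℝ) ^ (a g2 - a (g2+1)) * (1 - (p:ℝ)⁻¹)⁻¹))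
        ≤ ((p:ℝ) - 1) * ((1 - (p:ℝ)⁻¹)⁻¹ * ((t * ((p:ℝ)⁻¹ * (p:ℝ)⁻¹)) * (1 - (p:ℝ)⁻¹)⁻¹)) := by
      have h1 : (0:ℝ) ≤ (p:ℝ) - 1 := by linarith
      have h2' : (0:ℝ) ≤ (1 - (p:ℝ)⁻¹)⁻¹ := by positivity
      gcongr
    refine lt_of_le_of_lt hstep ?_
    rw [hc]
    have key3 : ((p:ℝ) - 1) * ((1 - (p:ℝ)⁻¹)⁻¹ * ((t * ((p:ℝ)⁻¹ * (p:ℝ)⁻¹)) * (1 - (p:ℝ)⁻¹)⁻¹))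
        * ((1 - (p:ℝ)⁻¹) * (1 - (p:ℝ)⁻¹))
        = ((p:ℝ) - 1) * ((p:ℝ)⁻¹ * (p:ℝ)⁻¹) * t := by
      have h5 : (1 - (p:ℝ)⁻¹)⁻¹ * (1 - (p:ℝ)⁻¹) = 1 := inv_mul_cancel₀ (ne_of_gt hy)
      linear_combination (((p:ℝ)-1)*t*((p:ℝ)⁻¹*(p:ℝ)⁻¹)*((1-(p:ℝ)⁻¹)⁻¹*(1-(p:ℝ)⁻¹)+1)) * h5
    nlinarith [key3, mul_pos hy hy, mul_lt_mul_of_pos_right hcube ht0]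
  have hSR0 : ((p:ℝ) - 1) * SR ≤ ((p:ℝ) - 1) * ((1 - (p:ℝ)⁻¹)⁻¹ * ((p:ℝ) ^ (a g2 - a (g2+1)) * (1 - (p:ℝ)⁻¹)⁻¹)) := by
    have h1 : (0:ℝ) ≤ (p:ℝ) - 1 := by linarith
    exact mul_le_mul_of_nonneg_left hSRb h1
  linarith

private lemma hk_better_up {p s r : ℕ} {a : ℕ → ℤ} (hP : 3 ≤ (p : ℝ))
    (ha : Admissible s r a) {g1 g2 : ℕ} (h12 : g1 < g2) (hg2 : g2 + 1 < r)
    (hgap : a (g1 + 1) - a g1 + 2 ≤ a (g2 + 1) - a g2) :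
    ∃ b : ℕ → ℤ, Admissible s r b ∧ hp p r b < hp p r a := by
  obtain ⟨h0, hlast, hstep⟩ := ha
  have hP0 : (0:ℝ) < p := by linarith
  have hP1 : (1:ℝ) ≤ p := by linarith
  have hg1 : g1 + 1 < r := by omega
  have hd1 : 1 ≤ a (g1+1) - a g1 := by have := hstep g1 hg1; omega
  refine ⟨fun i => if g1 < i ∧ i ≤ g2 then a i + 1 else a i, ⟨?_, ?_, ?_⟩, ?_⟩
  · simpa using h0
  · show (if g1 < r - 1 ∧ r - 1 ≤ g2 then a (r - 1) + 1 else a (r - 1)) = (s:ℤ) - 1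
    rw [if_neg (by omega : ¬(g1 < r - 1 ∧ r - 1 ≤ g2))]; exact hlast
  · intro i hi
    have hstepi := hstep i hi
    dsimp only
    by_cases hA : g1 < i ∧ i ≤ g2 <;> by_cases hB : g1 < i + 1 ∧ i + 1 ≤ g2
    · rw [if_pos hA, if_pos hB]; omega
    · rw [if_pos hA, if_neg hB]
      have hig : i = g2 := by omega
      subst hig
      omega
    · rw [if_neg hA, if_pos hB]; omega
    · rw [if_neg hA, if_neg hB]; omega
  · apply hk_hp_lt hP (hk_diff_ge hstep) hg1 hg2 hgap
    intro k hk i hi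
    by_cases hki : k < i
    · rw [if_pos hki, if_pos hki]
      by_cases hA : g1 < k ∧ k ≤ g2
      · by_cases hB : g1 < i ∧ i ≤ g2
        · -- both in block
          rw [if_pos hA, if_pos hB,
            (by ring : a k + 1 - (a i + 1) = a k - a i),
            if_neg (by rintro ⟨rfl, -⟩; omega : ¬(k = g1 ∧ i = g1 + 1))]
          have h2 : (0:ℝ) ≤ (if k ≤ g2 ∧ g2 < i then (p:ℝ) ^ (a k - a i) else 0) := by
            split_ifs
            · positivity
            · exact le_rfl
          have h3 : (0:ℝ) ≤ ((p:ℝ) - 1) * (if k ≤ g2 ∧ g2 < i then (p:ℝ) ^ (a k - a i) else 0) :=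
            mul_nonneg (by linarith) h2
          linarith
        · -- k in, i out (right)
          rw [if_pos hA, if_neg hB,
            if_neg (by rintro ⟨rfl, -⟩; omega : ¬(k = g1 ∧ i = g1 + 1)),
            if_pos (⟨hA.2, by omega⟩ : k ≤ g2 ∧ g2 < i),
            (by ring : a k + 1 - a i = (a k - a i) + 1),
            zpow_add_one₀ (ne_of_gt hP0)]
          linarith
      · by_cases hB : g1 < i ∧ i ≤ g2
        · -- k out, i in
          rw [if_neg hA, if_pos hB,
            (by ring : a k - (a i + 1) = (a k - a i) - 1),
            zpow_sub_one₀ (ne_of_gt hP0),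
            if_neg (by rintro ⟨-, h⟩; omega : ¬(k ≤ g2 ∧ g2 < i))]
          by_cases he : k = g1 ∧ i = g1 + 1
          · obtain ⟨rfl, rfl⟩ := he
            rw [if_pos ⟨rfl, rfl⟩]
            linarith
          · rw [if_neg he]
            have ht0 : (0:ℝ) ≤ (p:ℝ) ^ (a k - a i) := by positivity
            have hxle : (p:ℝ)⁻¹ ≤ 1 := by
              rw [inv_le_one_iff₀]; right; linarith
            have h4 := mul_le_mul_of_nonneg_left hxle ht0
            linarith
        · -- both out
          rw [if_neg hA, if_neg hB,
            if_neg (by rintro ⟨rfl, rfl⟩; exact hB ⟨by omega, by omega⟩ :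
              ¬(k = g1 ∧ i = g1 + 1))]
          have h2 : (0:ℝ) ≤ (if k ≤ g2 ∧ g2 < i then (p:ℝ) ^ (a k - a i) else 0) := by
            split_ifs
            · positivity
            · exact le_rfl
          have h3 : (0:ℝ) ≤ ((p:ℝ) - 1) * (if k ≤ g2 ∧ g2 < i then (p:ℝ) ^ (a k - a i) else 0) :=
            mul_nonneg (by linarith) h2
          linarith
    · rw [if_neg hki, if_neg hki,
        if_neg (by rintro ⟨rfl, rfl⟩; omega : ¬(k = g1 ∧ i = g1 + 1))]
      have h2 : (0:ℝ) ≤ (if k ≤ g2 ∧ g2 < i then (p:ℝ) ^ (a k - a i) else 0) := by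
        split_ifs
        · positivity
        · exact le_rfl
      have h3 : (0:ℝ) ≤ ((p:ℝ) - 1) * (if k ≤ g2 ∧ g2 < i then (p:ℝ) ^ (a k - a i) else 0) :=
        mul_nonneg (by linarith) h2
      linarith

private lemma hk_better_down {p s r : ℕ} {a : ℕ → ℤ} (hP : 3 ≤ (p : ℝ))
    (ha : Admissible s r a) {g1 g2 : ℕ} (h21 : g2 < g1) (hg1 : g1 + 1 < r)
    (hgap : a (g1 + 1) - a g1 + 2 ≤ a (g2 + 1) - a g2) :
    ∃ b : ℕ → ℤ, Admissible s r b ∧ hp p r b < hp p r a := by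
  obtain ⟨h0, hlast, hstep⟩ := ha
  have hP0 : (0:ℝ) < p := by linarith
  have hP1 : (1:ℝ) ≤ p := by linarith
  have hg2 : g2 + 1 < r := by omega
  have hd1 : 1 ≤ a (g1+1) - a g1 := by have := hstep g1 hg1; omega
  refine ⟨fun i => if g2 < i ∧ i ≤ g1 then a i - 1 else a i, ⟨?_, ?_, ?_⟩, ?_⟩
  · simpa using h0
  · show (if g2 < r - 1 ∧ r - 1 ≤ g1 then a (r - 1) - 1 else a (r - 1)) = (s:ℤ) - 1
    rw [if_neg (by omega : ¬(g2 < r - 1 ∧ r - 1 ≤ g1))]; exact hlast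
  · intro i hi
    have hstepi := hstep i hi
    dsimp only
    by_cases hA : g2 < i ∧ i ≤ g1 <;> by_cases hB : g2 < i + 1 ∧ i + 1 ≤ g1
    · rw [if_pos hA, if_pos hB]; omega
    · rw [if_pos hA, if_neg hB]
      have hig : i = g1 := by omega
      subst hig
      omega
    · rw [if_neg hA, if_pos hB]
      have hig : i = g2 := by omega
      subst hig
      omega
    · rw [if_neg hA, if_neg hB]; omega
  · apply hk_hp_lt hP (hk_diff_ge hstep) hg1 hg2 hgap
    intro k hk i hi
    by_cases hki : k < i
    · rw [if_pos hki, if_pos hki]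
      by_cases hA : g2 < k ∧ k ≤ g1
      · by_cases hB : g2 < i ∧ i ≤ g1
        · -- both in block
          rw [if_pos hA, if_pos hB,
            (by ring : a k - 1 - (a i - 1) = a k - a i),
            if_neg (by rintro ⟨-, rfl⟩; omega : ¬(k = g1 ∧ i = g1 + 1))]
          have h2 : (0:ℝ) ≤ (if k ≤ g2 ∧ g2 < i then (p:ℝ) ^ (a k - a i) else 0) := by
            split_ifs
            · positivity
            · exact le_rfl
          have h3 : (0:ℝ) ≤ ((p:ℝ) - 1) * (if k ≤ g2 ∧ g2 < i then (p:ℝ) ^ (a k - a i) else 0) :=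
            mul_nonneg (by linarith) h2
          linarith
        · -- k in, i out (right of block)
          rw [if_pos hA, if_neg hB,
            (by ring : a k - 1 - a i = (a k - a i) - 1),
            zpow_sub_one₀ (ne_of_gt hP0),
            if_neg (by rintro ⟨h, -⟩; omega : ¬(k ≤ g2 ∧ g2 < i))]
          by_cases he : k = g1 ∧ i = g1 + 1
          · obtain ⟨rfl, rfl⟩ := he
            rw [if_pos ⟨rfl, rfl⟩]
            linarith
          · rw [if_neg he]
            have ht0 : (0:ℝ) ≤ (p:ℝ) ^ (a k - a i) := by positivity
            have hxle : (p:ℝ)⁻¹ ≤ 1 := by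
              rw [inv_le_one_iff₀]; right; linarith
            have h4 := mul_le_mul_of_nonneg_left hxle ht0
            linarith
      · by_cases hB : g2 < i ∧ i ≤ g1
        · -- k out (left), i in
          rw [if_neg hA, if_pos hB,
            (by ring : a k - (a i - 1) = (a k - a i) + 1),
            zpow_add_one₀ (ne_of_gt hP0),
            if_neg (by rintro ⟨-, rfl⟩; omega : ¬(k = g1 ∧ i = g1 + 1)),
            if_pos (⟨by omega, hB.1⟩ : k ≤ g2 ∧ g2 < i)]
          linarith
        · -- both out
          rw [if_neg hA, if_neg hB,
            if_neg (by rintro ⟨rfl, rfl⟩; exact hA ⟨by omega, by omega⟩ :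
              ¬(k = g1 ∧ i = g1 + 1))]
          have h2 : (0:ℝ) ≤ (if k ≤ g2 ∧ g2 < i then (p:ℝ) ^ (a k - a i) else 0) := by
            split_ifs
            · positivity
            · exact le_rfl
          have h3 : (0:ℝ) ≤ ((p:ℝ) - 1) * (if k ≤ g2 ∧ g2 < i then (p:ℝ) ^ (a k - a i) else 0) :=
            mul_nonneg (by linarith) h2
          linarith
    · rw [if_neg hki, if_neg hki,
        if_neg (by rintro ⟨rfl, rfl⟩; omega : ¬(k = g1 ∧ i = g1 + 1))]
      have h2 : (0:ℝ) ≤ (if k ≤ g2 ∧ g2 < i then (p:ℝ) ^ (a k - a i) else 0) := by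
        split_ifs
        · positivity
        · exact le_rfl
      have h3 : (0:ℝ) ≤ ((p:ℝ) - 1) * (if k ≤ g2 ∧ g2 < i then (p:ℝ) ^ (a k - a i) else 0) :=
        mul_nonneg (by linarith) h2
      linarith

/-- If `(r-1) ∣ (s-1)` and `a` minimizes `h_p` over `A(s,r)`, then `a` is the
arithmetic progression `(0, q, 2q, …, (r-1)q)` with `q = (s-1)/(r-1)`. -/
theorem stmt0 (p s r : ℕ) (hpp : p.Prime) (hp3 : 3 ≤ p) (hr : 3 ≤ r) (hrs : r < s)
    (hdvd : (r - 1) ∣ (s - 1)) (a : ℕ → ℤ) (ha : IsMinimizer p s r a) :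
    ∀ i < r, a i = (((s - 1) / (r - 1) : ℕ) : ℤ) * i := by
  obtain ⟨hadm, hmin⟩ := ha
  have hP : 3 ≤ (p:ℝ) := by exact_mod_cast hp3
  have hgaple : ∀ g1 g2 : ℕ, g1 + 1 < r → g2 + 1 < r →
      a (g2+1) - a g2 ≤ a (g1+1) - a g1 + 1 := by
    intro g1 g2 h1 h2
    by_contra hcon
    push_neg at hcon
    have hgap : a (g1+1) - a g1 + 2 ≤ a (g2+1) - a g2 := by omega
    rcases Nat.lt_trichotomy g1 g2 with h | h | h
    · obtain ⟨b, hb, hlt⟩ := hk_better_up hP hadm h h2 hgap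
      exact absurd (hmin b hb) (not_le.2 hlt)
    · rw [h] at hgap; omega
    · obtain ⟨b, hb, hlt⟩ := hk_better_down hP hadm h h1 hgap
      exact absurd (hmin b hb) (not_le.2 hlt)
  have hsum : ∑ j ∈ Finset.range (r-1), (a (j+1) - a j) = (s:ℤ) - 1 := by
    rw [Finset.sum_range_sub (fun j => a j) (r-1)]
    rw [hadm.2.1, hadm.1]
    ring
  set q : ℤ := (((s - 1) / (r - 1) : ℕ) : ℤ) with hqdef
  have hq : ((r:ℤ) - 1) * q = (s:ℤ) - 1 := by
    have hN : (r-1) * ((s-1)/(r-1)) = s-1 := Nat.mul_div_cancel' hdvd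
    have hc := congrArg (fun n : ℕ => (n : ℤ)) hN
    simp only [Nat.cast_mul] at hc
    have e1 : ((r-1 : ℕ) : ℤ) = (r:ℤ) - 1 := by omega
    have e2 : ((s-1 : ℕ) : ℤ) = (s:ℤ) - 1 := by omega
    rw [e1, e2] at hc
    exact hc
  have e1 : ((r-1 : ℕ) : ℤ) = (r:ℤ) - 1 := by omega
  have hdq : ∀ j, j + 1 < r → a (j+1) - a j = q := by
    intro j hj
    by_contra hne
    have hjm : j ∈ Finset.range (r-1) := Finset.mem_range.2 (by omega)
    rcases lt_or_gt_of_ne hne with hlt | hgt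
    · have hle : ∀ k ∈ Finset.range (r-1), a (k+1) - a k ≤ q := by
        intro k hk
        simp only [Finset.mem_range] at hk
        have := hgaple j k hj (by omega)
        omega
      have hlt2 : ∑ j ∈ Finset.range (r-1), (a (j+1) - a j)
          < ∑ _j ∈ Finset.range (r-1), q :=
        Finset.sum_lt_sum hle ⟨j, hjm, by omega⟩
      rw [Finset.sum_const, Finset.card_range, nsmul_eq_mul, e1, hq, hsum] at hlt2
      exact lt_irrefl _ hlt2
    · have hge : ∀ k ∈ Finset.range (r-1), q ≤ a (k+1) - a k := by
        intro k hk
        simp only [Finset.mem_range] at hk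
        have := hgaple k j (by omega) hj
        omega
      have hlt2 : ∑ _j ∈ Finset.range (r-1), q
          < ∑ j ∈ Finset.range (r-1), (a (j+1) - a j) :=
        Finset.sum_lt_sum hge ⟨j, hjm, by omega⟩
      rw [Finset.sum_const, Finset.card_range, nsmul_eq_mul, e1, hq, hsum] at hlt2
      exact lt_irrefl _ hlt2
  intro i
  induction i with
  | zero => intro _; simpa using hadm.1
  | succ n ih =>
    intro hi
    have h1 := hdq n hi
    have h2 := ih (by omega)
    push_cast at h2 ⊢
    linear_combination h1 + h2
end

section
/- Let p ≥ 3 be a prime and let 3 ≤ r < s be integers with (r-1) dividing (s-1), and set q = (s-1)/(r-1) ∈ ℤ. Then min h_p = (1/(p^q - 1)) · ( r - 1 - (1/(p^q - 1)) · (1 - 1/p^{q(r-1)}) ). -/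
/-!
Write `g j = a (j + 1) - a j` for the gaps of an admissible tuple: positive integers with
sum `s - 1 = q (r - 1)`, in terms of which `h_p(a)` is the sum over `k < i` of
`p ^ (-(g k + ⋯ + g (i - 1)))`. If the gaps are not all equal to `q`, then `g I + 2 ≤ g J` for
some `I, J`, and moving one unit from `g J` to `g I` strictly decreases `h_p`: the singleton
interval `{I}` alone loses `(1 - 1/p) p ^ (-g I)`, whereas the intervals through `J` gain at most
`(p - 1) p ^ (-g J) (p / (p - 1)) ^ 2 ≤ p ^ (-g I) / (p - 1)`, which is smaller once `p ≥ 3`.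
Since `∑ g j ^ 2` drops at each such move, the equally spaced tuple is the minimiser, and its
value is a double geometric sum.
-/

open Finset

noncomputable def intervalWeight (c : ℝ) (g : ℕ → ℤ) (k i : ℕ) : ℝ :=
  c ^ (-∑ j ∈ Ico k i, g j)

noncomputable def gapEnergy (c : ℝ) (m : ℕ) (g : ℕ → ℤ) : ℝ :=
  ∑ k ∈ range (m + 1), ∑ i ∈ range (m + 1), if k < i then intervalWeight c g k i else 0

theorem hp_eq_gapEnergy (p m : ℕ) (a : ℕ → ℤ) :
    hp p (m + 1) a = gapEnergy p m (fun j => a (j + 1) - a j) := by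
  refine sum_congr rfl fun k _ => sum_congr rfl fun i _ => ?_
  split_ifs with hki
  · rw [intervalWeight, sum_Ico_sub a hki.le, neg_sub]
  · rfl

theorem gapEnergy_congr {c : ℝ} {m : ℕ} {g g' : ℕ → ℤ} (h : ∀ j < m, g j = g' j) :
    gapEnergy c m g = gapEnergy c m g' := by
  refine sum_congr rfl fun k _ => sum_congr rfl fun i hi => ?_
  split_ifs
  · rw [intervalWeight, intervalWeight, sum_congr rfl fun j hj => h j ?_]
    have := mem_range.1 hi
    have := (mem_Ico.1 hj).2
    omega
  · rfl

theorem sum_sum_ite_lt_inv_pow {P : ℝ} (hP0 : P ≠ 0) (hP1 : P ≠ 1) (n : ℕ) :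
    ∑ k ∈ range (n + 1), ∑ i ∈ range (n + 1), (if k < i then (P ^ (i - k))⁻¹ else 0) =
      1 / (P - 1) * (n - 1 / (P - 1) * (1 - 1 / P ^ n)) := by
  have hP1' : P - 1 ≠ 0 := sub_ne_zero.2 hP1
  induction n with
  | zero => simp
  | succ n ih =>
    have hcol :
        ∑ k ∈ range (n + 1), (P ^ (n + 1 - k))⁻¹ = 1 / (P - 1) * (1 - 1 / P ^ (n + 1)) := by
      rw [← sum_range_reflect]
      have : ∀ j ∈ range (n + 1), (P ^ (n + 1 - (n + 1 - 1 - j)))⁻¹ = P⁻¹ * P⁻¹ ^ j := by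
        intro j hj
        rw [mem_range] at hj
        rw [show n + 1 - (n + 1 - 1 - j) = j + 1 by omega, pow_succ', mul_inv, inv_pow]
      rw [sum_congr rfl this, ← mul_sum, geom_sum_eq (inv_ne_one.2 hP1), inv_pow]
      field_simp
      ring
    rw [sum_range_succ, sum_eq_zero (s := range (n + 2)) fun i hi => if_neg (by
      simp only [mem_range] at hi; omega)]
    simp only [sum_range_succ (n := n + 1)]
    rw [sum_add_distrib, ih, sum_congr rfl fun k hk => if_pos (mem_range.1 hk), hcol]
    field_simp
    push_cast
    ring

theorem gapEnergy_const {c : ℝ} (hc : 1 < c) {q : ℕ} (hq : 0 < q) (m : ℕ) :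
    gapEnergy c m (fun _ => (q : ℤ)) =
      1 / (c ^ q - 1) * (m - 1 / (c ^ q - 1) * (1 - 1 / c ^ (q * m))) := by
  have hcq : 1 < c ^ q := one_lt_pow₀ hc hq.ne'
  rw [pow_mul, ← sum_sum_ite_lt_inv_pow (by positivity) hcq.ne']
  refine sum_congr rfl fun k _ => sum_congr rfl fun i _ => ?_
  split_ifs with hki
  · rw [intervalWeight, sum_const, Nat.card_Ico, zpow_neg, nsmul_eq_mul, ← pow_mul]
    norm_cast
    rw [mul_comm]
  · rfl

theorem sum_pow_le_of_injOn {s : Finset ℕ} {f : ℕ → ℕ} (hf : Set.InjOn f s) {x : ℝ}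
    (hx0 : 0 ≤ x) (hx1 : x < 1) : ∑ k ∈ s, x ^ f k ≤ (1 - x)⁻¹ := by
  rw [← sum_image hf, ← tsum_geometric_of_lt_one hx0 hx1]
  exact (summable_geometric_of_lt_one hx0 hx1).sum_le_tsum _ fun n _ => pow_nonneg hx0 n

section IntervalWeight

variable {c : ℝ} {g : ℕ → ℤ} {I J k i : ℕ}

theorem intervalWeight_nonneg (hc : 0 ≤ c) : 0 ≤ intervalWeight c g k i :=
  zpow_nonneg hc _

theorem intervalWeight_single_add_sub_single (hc : c ≠ 0) :
    intervalWeight c (g + Pi.single I 1 - Pi.single J 1) k i =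
      intervalWeight c g k i *
        c ^ ((if J ∈ Ico k i then 1 else 0) - (if I ∈ Ico k i then 1 else 0) : ℤ) := by
  simp only [intervalWeight, ← zpow_add₀ hc, Pi.sub_apply, Pi.add_apply, sum_sub_distrib,
    sum_add_distrib, sum_pi_single']
  ring_nf

theorem intervalWeight_single_add_sub_single_sub_le (hc : 1 ≤ c) :
    intervalWeight c (g + Pi.single I 1 - Pi.single J 1) k i - intervalWeight c g k i ≤
      (c - 1) * if J ∈ Ico k i then intervalWeight c g k i else 0 := by
  have hw := intervalWeight_nonneg (g := g) (k := k) (i := i) (zero_le_one.trans hc)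
  rw [intervalWeight_single_add_sub_single (by positivity)]
  calc _ ≤ intervalWeight c g k i * c ^ (if J ∈ Ico k i then 1 else 0 : ℤ) -
        intervalWeight c g k i :=
        sub_le_sub_right (mul_le_mul_of_nonneg_left
          (zpow_le_zpow_right₀ hc (by split_ifs <;> norm_num)) hw) _
    _ = _ := by split_ifs <;> simp only [zpow_one, zpow_zero] <;> ring

theorem intervalWeight_le_of_mem (hc : 1 ≤ c) (hg : ∀ j ∈ Ico k i, 1 ≤ g j)
    (hJ : J ∈ Ico k i) : intervalWeight c g k i ≤ c ^ (-g J) * c⁻¹ ^ (i - k - 1) := by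
  have hsum : g J + (i - k - 1 : ℕ) ≤ ∑ j ∈ Ico k i, g j := by
    have hrest := card_nsmul_le_sum ((Ico k i).erase J) g 1
      fun j hj => hg j (mem_of_mem_erase hj)
    rw [card_erase_of_mem hJ, Nat.card_Ico, nsmul_one] at hrest
    rw [← add_sum_erase _ _ hJ]
    exact add_le_add_right hrest _
  calc intervalWeight c g k i ≤ c ^ (-(g J + (i - k - 1 : ℕ))) :=
        zpow_le_zpow_right₀ hc (neg_le_neg hsum)
    _ = c ^ (-g J) * c⁻¹ ^ (i - k - 1) := by
        rw [neg_add, zpow_add₀ (by positivity), zpow_neg c ((i - k - 1 : ℕ) : ℤ), zpow_natCast,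
          inv_pow]

theorem sum_intervalWeight_mem_le (hc : 1 < c) {m : ℕ} (hg : ∀ j < m, 1 ≤ g j) :
    ∑ k ∈ range (m + 1), ∑ i ∈ range (m + 1),
        (if J ∈ Ico k i then intervalWeight c g k i else 0) ≤
      c ^ (-g J) * (1 - c⁻¹)⁻¹ ^ 2 := by
  set x := c⁻¹
  have hx0 : 0 ≤ x := by positivity
  have hx1 : x < 1 := inv_lt_one_of_one_lt₀ hc
  have hterm : ∀ k ∈ range (m + 1), ∀ i ∈ range (m + 1),
      (if J ∈ Ico k i then intervalWeight c g k i else 0) ≤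
        c ^ (-g J) * ((if k ≤ J then x ^ (J - k) else 0) *
          (if J < i then x ^ (i - (J + 1)) else 0)) := by
    intro k _ i hi
    by_cases hJ : J ∈ Ico k i
    · obtain ⟨hkJ, hJi⟩ := mem_Ico.1 hJ
      rw [if_pos hJ, if_pos hkJ, if_pos hJi, ← pow_add]
      refine (intervalWeight_le_of_mem hc.le (fun j hj => hg j ?_) hJ).trans_eq ?_
      · have := mem_range.1 hi
        have := (mem_Ico.1 hj).2
        omega
      · congr 2
        omega
    · rw [if_neg hJ]
      positivity
  have hleft : ∑ k ∈ range (m + 1), (if k ≤ J then x ^ (J - k) else 0) ≤ (1 - x)⁻¹ := by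
    rw [← sum_filter]
    refine sum_pow_le_of_injOn (fun a ha b hb hab => ?_) hx0 hx1
    simp only [coe_filter, Set.mem_ofPred_eq] at ha hb
    omega
  have hright : ∑ i ∈ range (m + 1), (if J < i then x ^ (i - (J + 1)) else 0) ≤ (1 - x)⁻¹ := by
    rw [← sum_filter]
    refine sum_pow_le_of_injOn (fun a ha b hb hab => ?_) hx0 hx1
    simp only [coe_filter, Set.mem_ofPred_eq] at ha hb
    omega
  calc _ ≤ ∑ k ∈ range (m + 1), ∑ i ∈ range (m + 1), c ^ (-g J) *
        ((if k ≤ J then x ^ (J - k) else 0) * (if J < i then x ^ (i - (J + 1)) else 0)) :=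
        sum_le_sum fun k hk => sum_le_sum fun i hi => hterm k hk i hi
    _ = c ^ (-g J) * ((∑ k ∈ range (m + 1), (if k ≤ J then x ^ (J - k) else 0)) *
        ∑ i ∈ range (m + 1), (if J < i then x ^ (i - (J + 1)) else 0)) := by
        rw [sum_mul_sum, mul_sum]
        exact sum_congr rfl fun k _ => by rw [mul_sum]
    _ ≤ c ^ (-g J) * (1 - x)⁻¹ ^ 2 := by
        rw [sq]
        gcongr

theorem gapEnergy_summand_single_add_sub_single_sub_le (hc : 1 ≤ c) (hIJ : I ≠ J) :
    (if k < i then intervalWeight c (g + Pi.single I 1 - Pi.single J 1) k i else 0) -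
        (if k < i then intervalWeight c g k i else 0) ≤
      (c⁻¹ - 1) * (if k = I ∧ i = I + 1 then c ^ (-g I) else 0) +
        (c - 1) * (if J ∈ Ico k i then intervalWeight c g k i else 0) := by
  have hw := intervalWeight_nonneg (g := g) (k := k) (i := i) (zero_le_one.trans hc)
  by_cases hsingle : k = I ∧ i = I + 1
  · obtain ⟨rfl, rfl⟩ := hsingle
    have hJ : J ∉ Ico k (k + 1) := by simpa using hIJ.symm
    rw [if_pos (lt_add_one k), if_pos (lt_add_one k), if_pos ⟨rfl, rfl⟩, if_neg hJ,
      intervalWeight_single_add_sub_single (zero_lt_one.trans_le hc).ne', if_neg hJ,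
      if_pos (by simp), intervalWeight, Nat.Ico_succ_singleton, sum_singleton, zero_sub,
      zpow_neg_one]
    exact le_of_eq (by ring)
  · rw [if_neg hsingle, mul_zero, zero_add, ite_sub_ite, sub_zero]
    by_cases hki : k < i
    · rw [if_pos hki]
      exact intervalWeight_single_add_sub_single_sub_le hc
    · rw [if_neg hki]
      exact mul_nonneg (sub_nonneg.2 hc) (by split_ifs <;> positivity)

end IntervalWeight

theorem gapEnergy_single_add_sub_single_lt {c : ℝ} (hc : 3 ≤ c) {m : ℕ} {g : ℕ → ℤ}
    (hg : ∀ j < m, 1 ≤ g j) {I J : ℕ} (hI : I < m) (hgap : g I + 2 ≤ g J) :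
    gapEnergy c m (g + Pi.single I 1 - Pi.single J 1) < gapEnergy c m g := by
  have hIJ : I ≠ J := by rintro rfl; omega
  have hc0 : 0 < c := by linarith
  set u := c ^ (-g I)
  set v := c ^ (-g J)
  have hu : 0 < u := zpow_pos hc0 _
  have hvu : v * c ^ 2 ≤ u := by
    rw [← zpow_natCast, ← zpow_add₀ hc0.ne']
    exact zpow_le_zpow_right₀ (by linarith) (by push_cast; linarith)
  have hsingle : ∑ k ∈ range (m + 1), ∑ i ∈ range (m + 1),
      (if k = I ∧ i = I + 1 then u else 0) = u := by
    simp [ite_and, hI, not_lt.2 hI.le]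
  suffices gapEnergy c m (g + Pi.single I 1 - Pi.single J 1) - gapEnergy c m g < 0 by
    linarith
  calc _ ≤ ∑ k ∈ range (m + 1), ∑ i ∈ range (m + 1),
        ((c⁻¹ - 1) * (if k = I ∧ i = I + 1 then u else 0) +
          (c - 1) * (if J ∈ Ico k i then intervalWeight c g k i else 0)) := by
        simp only [gapEnergy, ← sum_sub_distrib]
        exact sum_le_sum fun k _ => sum_le_sum fun i _ =>
          gapEnergy_summand_single_add_sub_single_sub_le (by linarith) hIJ
    _ ≤ (c⁻¹ - 1) * u + (c - 1) * (v * (1 - c⁻¹)⁻¹ ^ 2) := by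
        simp only [sum_add_distrib, ← mul_sum, hsingle]
        gcongr
        · linarith
        · exact sum_intervalWeight_mem_le (by linarith) hg
    _ < 0 := by
        have hJterm : (c - 1) * (v * (1 - c⁻¹)⁻¹ ^ 2) ≤ u / 2 := by
          rw [show (c - 1) * (v * (1 - c⁻¹)⁻¹ ^ 2) = v * c ^ 2 / (c - 1) by
            field_simp]
          exact div_le_div₀ hu.le hvu (by norm_num) (by linarith)
        have hIterm : (c⁻¹ - 1) * u ≤ (3⁻¹ - 1) * u := by
          gcongr
        linarith

theorem exists_add_two_le_of_sum_eq {m : ℕ} {g : ℕ → ℤ} {q : ℤ}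
    (hsum : ∑ j ∈ range m, g j = q * m) (hne : ∃ j < m, g j ≠ q) :
    ∃ I < m, ∃ J < m, g I + 2 ≤ g J := by
  obtain ⟨j₀, hj₀, hne⟩ := hne
  by_contra! hclose
  have hconst : ∑ _j ∈ range m, q = q * m := by simp [mul_comm]
  rcases hne.lt_or_gt with hlt | hgt
  · have : ∑ j ∈ range m, g j < ∑ _j ∈ range m, q :=
      sum_lt_sum (fun j hj => by have := hclose j₀ hj₀ j (mem_range.1 hj); omega)
        ⟨j₀, mem_range.2 hj₀, hlt⟩
    linarith
  · have : ∑ _j ∈ range m, q < ∑ j ∈ range m, g j :=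
      sum_lt_sum (fun j hj => by have := hclose j (mem_range.1 hj) j₀ hj₀; omega)
        ⟨j₀, mem_range.2 hj₀, hgt⟩
    linarith

section GapMove

variable {m : ℕ} {g : ℕ → ℤ} {I J : ℕ}

theorem sum_single_add_sub_single (hI : I < m) (hJ : J < m) :
    ∑ j ∈ range m, (g + Pi.single I 1 - Pi.single J 1 : ℕ → ℤ) j = ∑ j ∈ range m, g j := by
  simp [sum_sub_distrib, sum_add_distrib, sum_pi_single', hI, hJ]

theorem sum_sq_single_add_sub_single (hI : I < m) (hJ : J < m) (hIJ : I ≠ J) :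
    ∑ j ∈ range m, (g + Pi.single I 1 - Pi.single J 1 : ℕ → ℤ) j ^ 2 =
      ∑ j ∈ range m, g j ^ 2 + 2 * (g I - g J + 1) := by
  have hpoint : ∀ j, (g + Pi.single I 1 - Pi.single J 1 : ℕ → ℤ) j ^ 2 =
      g j ^ 2 + ((if j = I then 2 * g I + 1 else 0) + (if j = J then 1 - 2 * g J else 0)) := by
    intro j
    simp only [Pi.sub_apply, Pi.add_apply, Pi.single_apply]
    split_ifs with h₁ h₂ <;> subst_vars <;> first | exact absurd rfl hIJ | ring
  simp only [hpoint, sum_add_distrib, sum_ite_eq', mem_range, hI, hJ, if_true]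
  ring

end GapMove

theorem gapEnergy_const_le {c : ℝ} (hc : 3 ≤ c) {m : ℕ} {g : ℕ → ℤ} {q : ℤ}
    (hg : ∀ j < m, 1 ≤ g j) (hsum : ∑ j ∈ range m, g j = q * m) :
    gapEnergy c m (fun _ => q) ≤ gapEnergy c m g := by
  suffices ∀ n : ℕ, ∀ g : ℕ → ℤ, ∑ j ∈ range m, g j ^ 2 < n → (∀ j < m, 1 ≤ g j) →
      ∑ j ∈ range m, g j = q * m → gapEnergy c m (fun _ => q) ≤ gapEnergy c m g from
    this ((∑ j ∈ range m, g j ^ 2).toNat + 1) g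
      (by have := Int.self_le_toNat (∑ j ∈ range m, g j ^ 2); push_cast; linarith) hg hsum
  intro n
  induction n with
  | zero => exact fun g hn => absurd hn (not_lt.2 (sum_nonneg fun j _ => sq_nonneg (g j)))
  | succ n ih =>
    intro g hn hg hsum
    by_cases hne : ∃ j < m, g j ≠ q
    · obtain ⟨I, hI, J, hJ, hgap⟩ := exists_add_two_le_of_sum_eq hsum hne
      have hIJ : I ≠ J := by rintro rfl; omega
      refine (ih _ ?_ (fun j hj => ?_) ((sum_single_add_sub_single hI hJ).trans hsum)).trans
        (gapEnergy_single_add_sub_single_lt hc hg hI hgap).le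
      · rw [sum_sq_single_add_sub_single hI hJ hIJ]
        push_cast at hn
        linarith
      · have := hg j hj
        have := hg I hI
        simp only [Pi.sub_apply, Pi.add_apply, Pi.single_apply]
        split_ifs <;> subst_vars <;> omega
    · push Not at hne
      exact (gapEnergy_congr fun j hj => (hne j hj).symm).le

theorem stmt1_general (p s r : ℕ) (hp3 : 3 ≤ p) (hr : 3 ≤ r) (hrs : r < s)
    (hdvd : (r - 1) ∣ (s - 1)) :
    IsLeast {x : ℝ | ∃ a : ℕ → ℤ, Admissible s r a ∧ hp p r a = x}
      ((1 / ((p : ℝ) ^ ((s - 1) / (r - 1)) - 1)) *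
        ((r : ℝ) - 1 - (1 / ((p : ℝ) ^ ((s - 1) / (r - 1)) - 1)) *
          (1 - 1 / (p : ℝ) ^ (((s - 1) / (r - 1)) * (r - 1))))) := by
  obtain ⟨m, rfl⟩ : ∃ m, r = m + 1 := ⟨r - 1, by omega⟩
  rw [Nat.add_sub_cancel] at hdvd ⊢
  set q := (s - 1) / m
  have hqm : (q : ℤ) * m = s - 1 := by
    rw [← Nat.cast_mul, Nat.div_mul_cancel hdvd, Nat.cast_sub (by omega), Nat.cast_one]
  have hq : 0 < q := Nat.pos_of_ne_zero fun h => by simp [h] at hqm; omega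
  have hp1 : (1 : ℝ) < p := by exact_mod_cast (by omega : 1 < p)
  rw [Nat.cast_add_one, add_sub_cancel_right, ← gapEnergy_const hp1 hq m]
  refine ⟨⟨fun i => q * i, ⟨by simp, by simp [hqm], fun i _ => ?_⟩, ?_⟩, ?_⟩
  · push_cast
    nlinarith
  · rw [hp_eq_gapEnergy]
    congr 1
    ext j
    push_cast
    ring
  · rintro _ ⟨a, ⟨ha0, ham, hmono⟩, rfl⟩
    rw [Nat.add_sub_cancel] at ham
    rw [hp_eq_gapEnergy]
    refine gapEnergy_const_le (by exact_mod_cast hp3)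
      (fun j hj => by linarith [hmono j (by omega)]) ?_
    rw [sum_range_sub, ha0, ham, hqm, sub_zero]

/-- If `(r-1) ∣ (s-1)` and `q = (s-1)/(r-1)`, then
`min h_p = (1/(p^q-1)) (r - 1 - (1/(p^q-1))(1 - 1/p^{q(r-1)}))`,
expressed as: this value is the least element of the set of values of `h_p` on `A(s,r)`. -/
theorem stmt1 (p s r : ℕ) (hpp : p.Prime) (hp3 : 3 ≤ p) (hr : 3 ≤ r) (hrs : r < s)
    (hdvd : (r - 1) ∣ (s - 1)) :
    IsLeast {x : ℝ | ∃ a : ℕ → ℤ, Admissible s r a ∧ hp p r a = x}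
      ((1 / ((p : ℝ) ^ ((s - 1) / (r - 1)) - 1)) *
        ((r : ℝ) - 1 - (1 / ((p : ℝ) ^ ((s - 1) / (r - 1)) - 1)) *
          (1 - 1 / (p : ℝ) ^ (((s - 1) / (r - 1)) * (r - 1))))) :=
  stmt1_general p s r hp3 hr hrs hdvd
end

section
/- Let p ≥ 3 be a prime and let 3 ≤ r < s be integers with (r-1) dividing s. If a ∈ A(s,r) satisfies h_p(a) = min h_p, then δ(a) = ([q], [q+1], [q+1], …, [q+1]) or δ(a) = ([q+1], [q+1], …, [q+1], [q]); that is, exactly one entry of δ(a) equals ⌊q⌋, it is the first or the last entry, and all other entries equal ⌊q⌋+1. -/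
/-- The delta vector of `a`: `δ_j(a) = a_{j+1} - a_j`, relevant for `j = 0,…,r-2`. -/
def dlt (a : ℕ → ℤ) (j : ℕ) : ℤ := a (j + 1) - a j

open Finset

lemma P_pos {p : ℕ} (hp3 : 3 ≤ p) : (0:ℝ) < (p:ℝ) := by
  have : (3:ℝ) ≤ (p:ℝ) := by exact_mod_cast hp3
  linarith

lemma P_one_lt {p : ℕ} (hp3 : 3 ≤ p) : (1:ℝ) < (p:ℝ) := by
  have : (3:ℝ) ≤ (p:ℝ) := by exact_mod_cast hp3
  linarith

/-- geometric sum bound -/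
lemma geom_le32 {x : ℝ} (h0 : 0 ≤ x) (hx : x ≤ 1/3) (n : ℕ) :
    ∑ j ∈ Finset.range n, x ^ j ≤ 3/2 := by
  have h1 : ∑ j ∈ Finset.range n, x ^ j ≤ ∑ j ∈ Finset.range n, (1/3:ℝ) ^ j := by
    apply Finset.sum_le_sum
    intro i _
    exact pow_le_pow_left₀ h0 hx i
  have h2 : ∑ j ∈ Finset.range n, (1/3:ℝ) ^ j = ((1/3:ℝ)^n - 1)/((1/3:ℝ) - 1) :=
    geom_sum_eq (by norm_num) n
  have h3 : (0:ℝ) ≤ (1/3:ℝ)^n := by positivity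
  rw [h2] at h1
  have : ((1/3:ℝ)^n - 1)/((1/3:ℝ) - 1) ≤ 3/2 := by
    rw [div_le_iff_of_neg (by norm_num)]
    linarith
  linarith

/-- sum of inverse powers bound -/
lemma sum_zpow_neg_le {p : ℕ} (hp3 : 3 ≤ p) (n : ℕ) :
    ∑ j ∈ Finset.range n, (p:ℝ) ^ (-(j:ℤ)) ≤ 3/2 := by
  have hP := P_pos hp3
  have : ∀ j : ℕ, (p:ℝ) ^ (-(j:ℤ)) = ((p:ℝ)⁻¹) ^ j := by
    intro j
    rw [zpow_neg, zpow_natCast, inv_pow]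
  simp_rw [this]
  apply geom_le32 (by positivity)
  rw [inv_le_comm₀ (by positivity) (by norm_num)]
  · norm_num
    exact_mod_cast hp3

def mv (a : ℕ → ℤ) (l u : ℕ) (ε : ℤ) : ℕ → ℤ :=
  fun i => a i + ε * (if l ≤ i ∧ i ≤ u then 1 else 0)

noncomputable def crossL (p r : ℕ) (a : ℕ → ℤ) (l u : ℕ) : ℝ :=
  ∑ K ∈ Finset.range r, ∑ I ∈ Finset.range r,
    if K < l ∧ l ≤ I ∧ I ≤ u then (p:ℝ) ^ (a K - a I) else 0

noncomputable def crossR (p r : ℕ) (a : ℕ → ℤ) (l u : ℕ) : ℝ :=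
  ∑ K ∈ Finset.range r, ∑ I ∈ Finset.range r,
    if l ≤ K ∧ K ≤ u ∧ u < I then (p:ℝ) ^ (a K - a I) else 0

lemma hp_mv_sub (p r : ℕ) (hp0 : 0 < p) (a : ℕ → ℤ) (l u : ℕ) (ε : ℤ)
    (hl : 1 ≤ l) (hlu : l ≤ u) :
    hp p r (mv a l u ε) - hp p r a
      = ((p:ℝ) ^ (-ε) - 1) * crossL p r a l u + ((p:ℝ) ^ ε - 1) * crossR p r a l u := by
  have hPne : ((p:ℝ)) ≠ 0 := by positivity
  unfold hp crossL crossR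
  rw [← Finset.sum_sub_distrib, Finset.mul_sum, Finset.mul_sum, ← Finset.sum_add_distrib]
  apply Finset.sum_congr rfl
  intro K _
  rw [← Finset.sum_sub_distrib, Finset.mul_sum, Finset.mul_sum, ← Finset.sum_add_distrib]
  apply Finset.sum_congr rfl
  intro I _
  by_cases hKI : K < I
  · simp only [if_pos hKI, mv]
    by_cases h1 : l ≤ K <;> by_cases h2 : K ≤ u <;> by_cases h3 : l ≤ I <;> by_cases h4 : I ≤ u <;>
      simp only [h1, h2, h3, h4, show (K < l) ↔ ¬ l ≤ K from by omega,
        show (u < I) ↔ ¬ I ≤ u from by omega, and_true, true_and, and_false, false_and,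
        if_true, if_false, not_true, not_false_iff, mul_one, mul_zero, add_zero] <;>
      first
        | (exfalso; omega)
        | ring1
        | (rw [show a K + (ε - a I) = a K - a I + ε from by ring, zpow_add₀ hPne]; ring1)
        | (rw [show a K + (-a I - ε) = a K - a I + (-ε) from by ring, zpow_add₀ hPne]; ring1)
        | (rw [show a K + (ε - (a I + ε)) = a K - a I from by ring]; ring1)
        | (rw [show a K + ε - (a I + ε) = a K - a I from by ring]; ring1)
        | (rw [show a K - (a I + ε) = a K - a I + (-ε) from by ring, zpow_add₀ hPne]; ring1)
        | (rw [show a K + ε - a I = a K - a I + ε from by ring, zpow_add₀ hPne]; ring1)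
  · simp only [if_neg hKI]
    have hA : ¬ (K < l ∧ l ≤ I ∧ I ≤ u) := by omega
    have hB : ¬ (l ≤ K ∧ K ≤ u ∧ u < I) := by omega
    simp [hA, hB]

lemma mv_admissible (s r : ℕ) (a : ℕ → ℤ) (ha : Admissible s r a) (l u : ℕ) (ε : ℤ)
    (hl : 1 ≤ l) (hlu : l ≤ u) (hur : u + 1 < r)
    (h1 : 0 < a l - a (l-1) + ε) (h2 : 0 < a (u+1) - a u - ε) :
    Admissible s r (mv a l u ε) := by
  obtain ⟨ha0, har, hmono⟩ := ha
  refine ⟨?_, ?_, ?_⟩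
  · simp only [mv]
    rw [if_neg (by omega), mul_zero, add_zero, ha0]
  · simp only [mv]
    rw [if_neg (by omega), mul_zero, add_zero, har]
  · intro i hi
    simp only [mv]
    rcases (show i + 1 < l ∨ i + 1 = l ∨ (l ≤ i ∧ i + 1 ≤ u) ∨ i = u ∨ u < i by omega) with
      h | h | h | h | h
    · rw [if_neg (by omega), if_neg (by omega)]
      simpa using hmono i hi
    · rw [if_neg (by omega), if_pos (by omega), mul_zero, mul_one, add_zero]
      subst h
      have hli : i + 1 - 1 = i := by omega
      rw [hli] at h1
      linarith
    · rw [if_pos (by omega), if_pos (by omega)]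
      simpa using hmono i hi
    · rw [if_pos (by omega), if_neg (by omega), mul_zero, mul_one, add_zero]
      subst h
      linarith [h2]
    · rw [if_neg (by omega), if_neg (by omega)]
      simpa using hmono i hi

/-- strict monotonicity gives gap of at least the index difference -/
lemma adm_gap (s r : ℕ) (a : ℕ → ℤ) (ha : Admissible s r a) :
    ∀ i j : ℕ, i ≤ j → j < r → (j:ℤ) - (i:ℤ) ≤ a j - a i := by
  intro i j hij hjr
  induction j with
  | zero =>
    have : i = 0 := by omega
    subst this
    simp
  | succ n ih =>
    rcases Nat.lt_or_ge i (n+1) with h | h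
    · have h1 := ih (by omega) (by omega)
      have h2 := ha.2.2 n hjr
      push_cast
      push_cast at h1
      linarith
    · have : i = n + 1 := by omega
      subst this
      simp

lemma sum_if_lt {M : Type*} [AddCommMonoid M] (f : ℕ → M) (e n : ℕ) (h : e ≤ n) :
    ∑ x ∈ Finset.range n, (if x < e then f x else 0) = ∑ x ∈ Finset.range e, f x := by
  rw [← Finset.sum_filter]
  apply Finset.sum_congr
  · ext x
    simp only [Finset.mem_filter, Finset.mem_range]
    omega
  · intros; rfl

lemma sum_if_gt {M : Type*} [AddCommMonoid M] (f : ℕ → M) (e n : ℕ) :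
    ∑ x ∈ Finset.range n, (if e < x then f x else 0)
      = ∑ j ∈ Finset.range (n - (e+1)), f (e + 1 + j) := by
  rw [← Finset.sum_filter, ← Finset.sum_Ico_eq_sum_range]
  apply Finset.sum_congr
  · ext x
    simp only [Finset.mem_filter, Finset.mem_range, Finset.mem_Ico]
    omega
  · intros; rfl

lemma crossL_point (p r : ℕ) (a : ℕ → ℤ) (e : ℕ) (her : e < r) :
    crossL p r a e e = ∑ K ∈ Finset.range r, if K < e then (p:ℝ) ^ (a K - a e) else 0 := by
  unfold crossL
  apply Finset.sum_congr rfl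
  intro K _
  by_cases hK : K < e
  · rw [if_pos hK]
    have hiff : ∀ I : ℕ, (K < e ∧ e ≤ I ∧ I ≤ e) ↔ e = I := fun I => by omega
    simp_rw [hiff]
    rw [Finset.sum_ite_eq (Finset.range r) e, if_pos (Finset.mem_range.2 her)]
  · rw [if_neg hK]
    have : ∀ I : ℕ, ¬(K < e ∧ e ≤ I ∧ I ≤ e) := fun I => by omega
    apply Finset.sum_eq_zero
    intro I _
    rw [if_neg (this I)]

lemma crossR_point (p r : ℕ) (a : ℕ → ℤ) (e : ℕ) (her : e < r) :
    crossR p r a e e = ∑ I ∈ Finset.range r, if e < I then (p:ℝ) ^ (a e - a I) else 0 := by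
  unfold crossR
  rw [Finset.sum_eq_single_of_mem e (Finset.mem_range.2 her)]
  · apply Finset.sum_congr rfl
    intro I _
    by_cases h : e < I
    · rw [if_pos ⟨le_refl e, le_refl e, h⟩, if_pos h]
    · rw [if_neg (by omega), if_neg h]
  · intro K _ hKe
    apply Finset.sum_eq_zero
    intro I _
    rw [if_neg (by omega)]

lemma crossL_nonneg (p r : ℕ) (a : ℕ → ℤ) (l u : ℕ) : 0 ≤ crossL p r a l u := by
  apply Finset.sum_nonneg
  intro K _
  apply Finset.sum_nonneg
  intro I _
  split
  · positivity
  · exact le_refl 0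

lemma crossR_nonneg (p r : ℕ) (a : ℕ → ℤ) (l u : ℕ) : 0 ≤ crossR p r a l u := by
  apply Finset.sum_nonneg
  intro K _
  apply Finset.sum_nonneg
  intro I _
  split
  · positivity
  · exact le_refl 0

/-- From `P * A < B`, `0 ≤ A` conclude `(P-1)*A + (P⁻¹-1)*B < 0`. -/
lemma delta_neg {p : ℕ} (hp3 : 3 ≤ p) (A B : ℝ) (hA : 0 ≤ A) (hk : (p:ℝ) * A < B) :
    ((p:ℝ) - 1) * A + ((p:ℝ)⁻¹ - 1) * B < 0 := by
  have hP1 := P_one_lt hp3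
  have hP0 := P_pos hp3
  have h1 : A < B / (p:ℝ) := by
    rw [lt_div_iff₀ hP0]
    linarith [hk, mul_comm (p:ℝ) A]
  have h2 : ((p:ℝ)⁻¹ - 1) * B = -(((p:ℝ) - 1) * (B / (p:ℝ))) := by
    field_simp
    ring
  rw [h2]
  have h3 : ((p:ℝ) - 1) * A < ((p:ℝ) - 1) * (B / (p:ℝ)) :=
    mul_lt_mul_of_pos_left h1 (by linarith)
  linarith

lemma cor3 (p s r t : ℕ) (hp3 : 3 ≤ p) (a : ℕ → ℤ) (ha : Admissible s r a)
    (e : ℕ) (he1 : 1 ≤ e) (he2 : 2*e < r - 1) (hrr : 3 ≤ r) (ht : 2 ≤ t)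
    (hcf : ∀ i, i < r → a i = (i:ℤ)*(t:ℤ) - (if e < i then 1 else 0)) :
    ∃ b : ℕ → ℤ, Admissible s r b ∧ hp p r b < hp p r a := by
  have hP0 := P_pos hp3
  have hPne : ((p:ℝ)) ≠ 0 := ne_of_gt hP0
  have her : e + 1 < r := by omega
  have hT : (2:ℤ) ≤ (t:ℤ) := by exact_mod_cast ht
  refine ⟨mv a e e (-1), ?_, ?_⟩
  · apply mv_admissible s r a ha e e (-1) he1 (le_refl e) her
    · rw [hcf e (by omega), hcf (e-1) (by omega), if_neg (by omega), if_neg (by omega)]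
      have : ((e-1:ℕ):ℤ) = (e:ℤ) - 1 := by omega
      rw [this]
      nlinarith
    · rw [hcf (e+1) (by omega), hcf e (by omega), if_pos (by omega), if_neg (by omega)]
      push_cast
      nlinarith
  · have hdiff := hp_mv_sub p r (by omega) a e e (-1) he1 (le_refl e)
    have hL : crossL p r a e e = ∑ j ∈ Finset.range e, (p:ℝ) ^ (-(1+(j:ℤ))*(t:ℤ)) := by
      rw [crossL_point p r a e (by omega), sum_if_lt _ _ _ (by omega),
        ← Finset.sum_range_reflect]
      apply Finset.sum_congr rfl
      intro j hj
      have hj' : j < e := Finset.mem_range.1 hj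
      congr 1
      rw [hcf (e-1-j) (by omega), hcf e (by omega), if_neg (by omega), if_neg (by omega)]
      have : ((e-1-j:ℕ):ℤ) = (e:ℤ) - 1 - (j:ℤ) := by omega
      rw [this]
      ring
    have hR : crossR p r a e e
        = ∑ j ∈ Finset.range (r - (e+1)), (p:ℝ) ^ (-(1+(j:ℤ))*(t:ℤ) + 1) := by
      rw [crossR_point p r a e (by omega), sum_if_gt]
      apply Finset.sum_congr rfl
      intro j hj
      have hj' : j < r - (e+1) := Finset.mem_range.1 hj
      congr 1
      rw [hcf (e+1+j) (by omega), hcf e (by omega)]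
      have h1 : (if e < e then (1:ℤ) else 0) = 0 := if_neg (by omega)
      have h2 : (if e < e+1+j then (1:ℤ) else 0) = 1 := if_pos (by omega)
      rw [h1, h2]
      push_cast
      ring
    have hkey : (p:ℝ) * crossL p r a e e < crossR p r a e e := by
      rw [hL, hR, Finset.mul_sum]
      have hterm : ∀ j : ℕ, (p:ℝ) * (p:ℝ) ^ (-(1+(j:ℤ))*(t:ℤ))
          = (p:ℝ) ^ (-(1+(j:ℤ))*(t:ℤ) + 1) := by
        intro j
        rw [zpow_add₀ hPne, zpow_one]
        ring
      simp_rw [hterm]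
      refine Finset.sum_lt_sum_of_subset (Finset.range_subset_range.2 (by omega)) (i := e)
        (Finset.mem_range.2 (by omega)) Finset.notMem_range_self (by positivity) ?_
      intro j _ _
      positivity
    have hneg := delta_neg hp3 (crossL p r a e e) (crossR p r a e e)
      (crossL_nonneg p r a e e) hkey
    have hsimp : ((p:ℝ) ^ (-(-1):ℤ) - 1) = ((p:ℝ) - 1) := by norm_num
    have hsimp2 : ((p:ℝ) ^ ((-1):ℤ) - 1) = ((p:ℝ)⁻¹ - 1) := by
      rw [zpow_neg_one]
    rw [hsimp, hsimp2] at hdiff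
    linarith

lemma cor4 (p s r t : ℕ) (hp3 : 3 ≤ p) (a : ℕ → ℤ) (ha : Admissible s r a)
    (e : ℕ) (he1 : e + 2 < r) (he2 : r - 1 ≤ 2*e) (hrr : 3 ≤ r) (ht : 2 ≤ t)
    (hcf : ∀ i, i < r → a i = (i:ℤ)*(t:ℤ) - (if e < i then 1 else 0)) :
    ∃ b : ℕ → ℤ, Admissible s r b ∧ hp p r b < hp p r a := by
  have hP0 := P_pos hp3
  have hPne : ((p:ℝ)) ≠ 0 := ne_of_gt hP0
  have hT : (2:ℤ) ≤ (t:ℤ) := by exact_mod_cast ht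
  refine ⟨mv a (e+1) (e+1) 1, ?_, ?_⟩
  · apply mv_admissible s r a ha (e+1) (e+1) 1 (by omega) (le_refl _) (by omega)
    · have he : e + 1 - 1 = e := by omega
      rw [he, hcf (e+1) (by omega), hcf e (by omega)]
      have h1 : (if e < e then (1:ℤ) else 0) = 0 := if_neg (by omega)
      have h2 : (if e < e+1 then (1:ℤ) else 0) = 1 := if_pos (by omega)
      rw [h1, h2]
      push_cast
      nlinarith
    · rw [hcf (e+1+1) (by omega), hcf (e+1) (by omega)]
      have h1 : (if e < e+1 then (1:ℤ) else 0) = 1 := if_pos (by omega)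
      have h2 : (if e < e+1+1 then (1:ℤ) else 0) = 1 := if_pos (by omega)
      rw [h1, h2]
      push_cast
      nlinarith
  · have hdiff := hp_mv_sub p r (by omega) a (e+1) (e+1) 1 (by omega) (le_refl _)
    have hL : crossL p r a (e+1) (e+1)
        = ∑ j ∈ Finset.range (e+1), (p:ℝ) ^ (-(1+(j:ℤ))*(t:ℤ) + 1) := by
      rw [crossL_point p r a (e+1) (by omega), sum_if_lt _ _ _ (by omega),
        ← Finset.sum_range_reflect]
      apply Finset.sum_congr rfl
      intro j hj
      have hj' : j < e + 1 := Finset.mem_range.1 hj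
      congr 1
      rw [hcf (e+1-1-j) (by omega), hcf (e+1) (by omega)]
      have h1 : ¬ (e < e+1-1-j) := by omega
      rw [if_neg h1]
      have h2 : (if e < e+1 then (1:ℤ) else 0) = 1 := if_pos (by omega)
      rw [h2]
      have : ((e+1-1-j:ℕ):ℤ) = (e:ℤ) - (j:ℤ) := by omega
      rw [this]
      push_cast
      ring
    have hR : crossR p r a (e+1) (e+1)
        = ∑ j ∈ Finset.range (r - (e+2)), (p:ℝ) ^ (-(1+(j:ℤ))*(t:ℤ)) := by
      rw [crossR_point p r a (e+1) (by omega), sum_if_gt]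
      have hre : r - (e + 1 + 1) = r - (e+2) := by omega
      rw [hre]
      apply Finset.sum_congr rfl
      intro j hj
      have hj' : j < r - (e+2) := Finset.mem_range.1 hj
      congr 1
      rw [hcf (e+1+1+j) (by omega), hcf (e+1) (by omega)]
      have h1 : (if e < e+1 then (1:ℤ) else 0) = 1 := if_pos (by omega)
      have h2 : (if e < e+1+1+j then (1:ℤ) else 0) = 1 := if_pos (by omega)
      rw [h1, h2]
      push_cast
      ring
    have hkey : (p:ℝ) * crossR p r a (e+1) (e+1) < crossL p r a (e+1) (e+1) := by
      rw [hL, hR, Finset.mul_sum]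
      have hterm : ∀ j : ℕ, (p:ℝ) * (p:ℝ) ^ (-(1+(j:ℤ))*(t:ℤ))
          = (p:ℝ) ^ (-(1+(j:ℤ))*(t:ℤ) + 1) := by
        intro j
        rw [zpow_add₀ hPne, zpow_one]
        ring
      simp_rw [hterm]
      refine Finset.sum_lt_sum_of_subset (Finset.range_subset_range.2 (by omega)) (i := r - (e+2))
        (Finset.mem_range.2 (by omega)) Finset.notMem_range_self (by positivity) ?_
      intro j _ _
      positivity
    have hneg := delta_neg hp3 (crossR p r a (e+1) (e+1)) (crossL p r a (e+1) (e+1))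
      (crossR_nonneg p r a (e+1) (e+1)) hkey
    have hsimp : ((p:ℝ) ^ (-(1:ℤ)) - 1) = ((p:ℝ)⁻¹ - 1) := by
      rw [zpow_neg_one]
    have hsimp2 : ((p:ℝ) ^ ((1:ℤ)) - 1) = ((p:ℝ) - 1) := by norm_num
    rw [hsimp, hsimp2] at hdiff
    linarith

/-- Geometric bound for `∑_{K ≤ u} P^(K-u)`. -/
lemma geomS1 {p : ℕ} (hp3 : 3 ≤ p) (r u : ℕ) (hur : u < r) :
    ∑ K ∈ Finset.range r, (if K ≤ u then (p:ℝ) ^ ((K:ℤ) - (u:ℤ)) else 0) ≤ 3/2 := by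
  have h1 : ∀ K : ℕ, (K ≤ u) ↔ (K < u + 1) := fun K => by omega
  simp_rw [h1]
  rw [sum_if_lt _ _ _ (by omega), ← Finset.sum_range_reflect]
  have h2 : ∀ j ∈ Finset.range (u+1),
      (p:ℝ) ^ (((u + 1 - 1 - j : ℕ):ℤ) - (u:ℤ)) = (p:ℝ) ^ (-(j:ℤ)) := by
    intro j hj
    have hj' : j < u + 1 := Finset.mem_range.1 hj
    congr 1
    omega
  rw [Finset.sum_congr rfl h2]
  exact sum_zpow_neg_le hp3 (u+1)

/-- Geometric bound for `∑_{I > u} P^(u+1-I)`. -/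
lemma geomS2 {p : ℕ} (hp3 : 3 ≤ p) (r u : ℕ) :
    ∑ I ∈ Finset.range r, (if u < I then (p:ℝ) ^ ((u:ℤ) + 1 - (I:ℤ)) else 0) ≤ 3/2 := by
  rw [sum_if_gt]
  have h2 : ∀ j ∈ Finset.range (r - (u+1)),
      (p:ℝ) ^ ((u:ℤ) + 1 - ((u + 1 + j : ℕ):ℤ)) = (p:ℝ) ^ (-(j:ℤ)) := by
    intro j _
    congr 1
    push_cast
    ring
  rw [Finset.sum_congr rfl h2]
  exact sum_zpow_neg_le hp3 _

lemma ifsum_nonneg (p r : ℕ) (c : ℕ → Prop) [DecidablePred c] (f : ℕ → ℤ) :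
    0 ≤ ∑ K ∈ Finset.range r, (if c K then (p:ℝ) ^ (f K) else 0) := by
  apply Finset.sum_nonneg
  intro K _
  split
  · positivity
  · exact le_refl 0

/-- final arithmetic: `X ≤ A`, `B ≤ (9/4) * X'`, `X' ≤ X * y²` gives negativity. -/
lemma delta_neg2 {p : ℕ} (hp3 : 3 ≤ p) (A B X X' : ℝ) (hX : 0 < X) (hX' : 0 < X')
    (hA : X ≤ A) (hB : B ≤ (9/4) * X') (hXX : X' ≤ X * (p:ℝ)⁻¹ * (p:ℝ)⁻¹) :
    ((p:ℝ)⁻¹ - 1) * A + ((p:ℝ) - 1) * B < 0 := by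
  set y : ℝ := (p:ℝ)⁻¹ with hy
  have hP0 := P_pos hp3
  have hP1 := P_one_lt hp3
  have hPy : (p:ℝ) * y = 1 := mul_inv_cancel₀ (ne_of_gt hP0)
  have hy0 : 0 < y := by positivity
  have hy3 : y ≤ 1/3 := by
    rw [hy, inv_le_comm₀ hP0 (by norm_num)]
    norm_num
    exact_mod_cast hp3
  have h1 : ((p:ℝ)⁻¹ - 1) * A ≤ (y - 1) * X := by
    apply mul_le_mul_of_nonpos_left hA
    linarith
  have h2 : ((p:ℝ) - 1) * B ≤ ((p:ℝ) - 1) * ((9/4) * (X * y * y)) := by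
    apply mul_le_mul_of_nonneg_left _ (by linarith)
    linarith
  have key : 0 < X * ((1 - y) * (1 - (9/4) * y)) :=
    mul_pos hX (mul_pos (by linarith) (by linarith))
  have h5 : (y - 1) * X + ((p:ℝ) - 1) * ((9/4) * (X * y * y))
      = -(X * ((1 - y) * (1 - (9/4) * y))) + ((p:ℝ) * y - 1) * ((9/4) * (X * y)) := by
    ring
  have h6 : (y - 1) * X + ((p:ℝ) - 1) * ((9/4) * (X * y * y)) < 0 := by
    rw [h5, hPy]
    simp
    linarith
  linarith

lemma cor1 (p s r : ℕ) (hp3 : 3 ≤ p) (a : ℕ → ℤ) (ha : Admissible s r a) (l u : ℕ)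
    (hl : 1 ≤ l) (hlu : l ≤ u) (hur : u + 1 < r)
    (hgap : a l - a (l-1) + 2 ≤ a (u+1) - a u) :
    ∃ b : ℕ → ℤ, Admissible s r b ∧ hp p r b < hp p r a := by
  have hP0 := P_pos hp3
  have hP1 := P_one_lt hp3
  have hPne : ((p:ℝ)) ≠ 0 := ne_of_gt hP0
  have hmono1 : a (l-1) < a l := by
    have := ha.2.2 (l-1) (by omega)
    have hll : l - 1 + 1 = l := by omega
    rwa [hll] at this
  refine ⟨mv a l u 1, ?_, ?_⟩
  · exact mv_admissible s r a ha l u 1 hl hlu hur (by linarith) (by linarith)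
  · have hdiff := hp_mv_sub p r (by omega) a l u 1 hl hlu
    set X : ℝ := (p:ℝ) ^ (a (l-1) - a l) with hXdef
    set X' : ℝ := (p:ℝ) ^ (a u - a (u+1)) with hX'def
    -- lower bound for crossL
    have hA : X ≤ crossL p r a l u := by
      unfold crossL
      have inner_nonneg : ∀ K ∈ Finset.range r,
          0 ≤ ∑ I ∈ Finset.range r, (if K < l ∧ l ≤ I ∧ I ≤ u then (p:ℝ) ^ (a K - a I) else 0) := by
        intro K _
        apply Finset.sum_nonneg
        intro I _
        split
        · positivity
        · exact le_refl 0
      have h1 : X ≤ ∑ I ∈ Finset.range r,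
          (if l-1 < l ∧ l ≤ I ∧ I ≤ u then (p:ℝ) ^ (a (l-1) - a I) else 0) := by
        have hle := Finset.single_le_sum (f := fun I =>
            (if l-1 < l ∧ l ≤ I ∧ I ≤ u then (p:ℝ) ^ (a (l-1) - a I) else 0))
          (fun I _ => by
            show (0:ℝ) ≤ if l-1 < l ∧ l ≤ I ∧ I ≤ u then (p:ℝ) ^ (a (l-1) - a I) else 0
            split
            · positivity
            · exact le_refl 0)
          (Finset.mem_range.2 (show l < r by omega))
        rwa [if_pos (show l-1 < l ∧ l ≤ l ∧ l ≤ u by omega)] at hle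
      calc X ≤ ∑ I ∈ Finset.range r, (if l-1 < l ∧ l ≤ I ∧ I ≤ u then (p:ℝ) ^ (a (l-1) - a I) else 0) := h1
        _ ≤ _ := Finset.single_le_sum inner_nonneg (Finset.mem_range.2 (show l - 1 < r by omega))
    -- upper bound for crossR
    have hB : crossR p r a l u ≤ (9/4) * X' := by
      have step1 : crossR p r a l u ≤ ∑ K ∈ Finset.range r, ∑ I ∈ Finset.range r,
          (if K ≤ u ∧ u < I then ((p:ℝ) ^ ((K:ℤ) - (u:ℤ))) * (X' * (p:ℝ) ^ ((u:ℤ) + 1 - (I:ℤ))) else 0) := by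
        unfold crossR
        apply Finset.sum_le_sum
        intro K hK
        apply Finset.sum_le_sum
        intro I hI
        by_cases hc : l ≤ K ∧ K ≤ u ∧ u < I
        · rw [if_pos hc, if_pos ⟨hc.2.1, hc.2.2⟩]
          rw [hX'def, ← zpow_add₀ hPne, ← zpow_add₀ hPne]
          apply zpow_le_zpow_right₀ (le_of_lt hP1)
          have g1 := adm_gap s r a ha K u hc.2.1 (by omega)
          have g2 := adm_gap s r a ha (u+1) I (by omega) (Finset.mem_range.1 hI)
          push_cast at g1 g2 ⊢
          linarith
        · rw [if_neg hc]
          split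
          · positivity
          · exact le_refl 0
      have step2 : ∑ K ∈ Finset.range r, ∑ I ∈ Finset.range r,
          (if K ≤ u ∧ u < I then ((p:ℝ) ^ ((K:ℤ) - (u:ℤ))) * (X' * (p:ℝ) ^ ((u:ℤ) + 1 - (I:ℤ))) else 0)
          = (∑ K ∈ Finset.range r, if K ≤ u then (p:ℝ) ^ ((K:ℤ) - (u:ℤ)) else 0)
            * (X' * ∑ I ∈ Finset.range r, (if u < I then (p:ℝ) ^ ((u:ℤ) + 1 - (I:ℤ)) else 0)) := by
        rw [Finset.sum_mul]
        apply Finset.sum_congr rfl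
        intro K _
        by_cases hK : K ≤ u
        · rw [if_pos hK, Finset.mul_sum, Finset.mul_sum]
          apply Finset.sum_congr rfl
          intro I _
          by_cases hI : u < I <;> simp [hI, hK]
        · rw [if_neg hK, zero_mul]
          apply Finset.sum_eq_zero
          intro I _
          rw [if_neg (by tauto)]
      have hS1 := geomS1 hp3 r u (by omega)
      have hS2 := geomS2 hp3 r u
      have hS1n := ifsum_nonneg p r (fun K => K ≤ u) (fun K => (K:ℤ) - (u:ℤ))
      have hS2n := ifsum_nonneg p r (fun I => u < I) (fun I => (u:ℤ) + 1 - (I:ℤ))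
      have hX'p : 0 < X' := by rw [hX'def]; positivity
      calc crossR p r a l u ≤ _ := step1
        _ = _ := step2
        _ ≤ (3/2) * (X' * (3/2)) := by
            apply mul_le_mul hS1 (mul_le_mul_of_nonneg_left hS2 (le_of_lt hX'p))
              (mul_nonneg (le_of_lt hX'p) hS2n) (by norm_num)
        _ = (9/4) * X' := by ring
    have hXX : X' ≤ X * (p:ℝ)⁻¹ * (p:ℝ)⁻¹ := by
      have : X * (p:ℝ)⁻¹ * (p:ℝ)⁻¹ = (p:ℝ) ^ ((a (l-1) - a l) + (-1) + (-1)) := by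
        rw [zpow_add₀ hPne, zpow_add₀ hPne, zpow_neg_one, hXdef]
      rw [this, hX'def]
      apply zpow_le_zpow_right₀ (le_of_lt hP1)
      linarith
    have hneg := delta_neg2 hp3 (crossL p r a l u) (crossR p r a l u) X X'
      (by rw [hXdef]; positivity) (by rw [hX'def]; positivity) hA hB hXX
    have hsimp : ((p:ℝ) ^ (-(1:ℤ)) - 1) = ((p:ℝ)⁻¹ - 1) := by rw [zpow_neg_one]
    have hsimp2 : ((p:ℝ) ^ ((1:ℤ)) - 1) = ((p:ℝ) - 1) := by norm_num
    rw [hsimp, hsimp2] at hdiff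
    linarith

lemma cor2 (p s r : ℕ) (hp3 : 3 ≤ p) (a : ℕ → ℤ) (ha : Admissible s r a) (l u : ℕ)
    (hl : 1 ≤ l) (hlu : l ≤ u) (hur : u + 1 < r)
    (hgap : a (u+1) - a u + 2 ≤ a l - a (l-1)) :
    ∃ b : ℕ → ℤ, Admissible s r b ∧ hp p r b < hp p r a := by
  have hP0 := P_pos hp3
  have hP1 := P_one_lt hp3
  have hPne : ((p:ℝ)) ≠ 0 := ne_of_gt hP0
  have hmono2 : a u < a (u+1) := ha.2.2 u hur
  have hcast : ((l-1:ℕ):ℤ) = (l:ℤ) - 1 := by omega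
  refine ⟨mv a l u (-1), ?_, ?_⟩
  · exact mv_admissible s r a ha l u (-1) hl hlu hur (by linarith) (by linarith)
  · have hdiff := hp_mv_sub p r (by omega) a l u (-1) hl hlu
    set X : ℝ := (p:ℝ) ^ (a (l-1) - a l) with hXdef
    set X' : ℝ := (p:ℝ) ^ (a u - a (u+1)) with hX'def
    -- lower bound for crossR
    have hBlow : X' ≤ crossR p r a l u := by
      unfold crossR
      have inner_nonneg : ∀ K ∈ Finset.range r,
          0 ≤ ∑ I ∈ Finset.range r, (if l ≤ K ∧ K ≤ u ∧ u < I then (p:ℝ) ^ (a K - a I) else 0) := by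
        intro K _
        apply Finset.sum_nonneg
        intro I _
        split
        · positivity
        · exact le_refl 0
      have h1 : X' ≤ ∑ I ∈ Finset.range r,
          (if l ≤ u ∧ u ≤ u ∧ u < I then (p:ℝ) ^ (a u - a I) else 0) := by
        have hle := Finset.single_le_sum (f := fun I =>
            (if l ≤ u ∧ u ≤ u ∧ u < I then (p:ℝ) ^ (a u - a I) else 0))
          (fun I _ => by
            show (0:ℝ) ≤ if l ≤ u ∧ u ≤ u ∧ u < I then (p:ℝ) ^ (a u - a I) else 0
            split
            · positivity
            · exact le_refl 0)
          (Finset.mem_range.2 (show u + 1 < r by omega))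
        rwa [if_pos (show l ≤ u ∧ u ≤ u ∧ u < u + 1 by omega)] at hle
      calc X' ≤ ∑ I ∈ Finset.range r, (if l ≤ u ∧ u ≤ u ∧ u < I then (p:ℝ) ^ (a u - a I) else 0) := h1
        _ ≤ _ := Finset.single_le_sum inner_nonneg (Finset.mem_range.2 (show u < r by omega))
    -- upper bound for crossL
    have hAup : crossL p r a l u ≤ (9/4) * X := by
      have step1 : crossL p r a l u ≤ ∑ K ∈ Finset.range r, ∑ I ∈ Finset.range r,
          (if K ≤ l-1 ∧ l-1 < I then
            ((p:ℝ) ^ ((K:ℤ) - ((l-1:ℕ):ℤ))) * (X * (p:ℝ) ^ (((l-1:ℕ):ℤ) + 1 - (I:ℤ))) else 0) := by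
        unfold crossL
        apply Finset.sum_le_sum
        intro K hK
        apply Finset.sum_le_sum
        intro I hI
        by_cases hc : K < l ∧ l ≤ I ∧ I ≤ u
        · rw [if_pos hc, if_pos (by omega)]
          rw [hXdef, ← zpow_add₀ hPne, ← zpow_add₀ hPne]
          apply zpow_le_zpow_right₀ (le_of_lt hP1)
          have g1 := adm_gap s r a ha K (l-1) (by omega) (by omega)
          have g2 := adm_gap s r a ha l I hc.2.1 (Finset.mem_range.1 hI)
          rw [hcast]
          push_cast at g1 g2 ⊢
          have hc2 : ((l-1:ℕ):ℤ) = (l:ℤ) - 1 := hcast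
          rw [hc2] at g1
          linarith
        · rw [if_neg hc]
          split
          · positivity
          · exact le_refl 0
      have step2 : ∑ K ∈ Finset.range r, ∑ I ∈ Finset.range r,
          (if K ≤ l-1 ∧ l-1 < I then
            ((p:ℝ) ^ ((K:ℤ) - ((l-1:ℕ):ℤ))) * (X * (p:ℝ) ^ (((l-1:ℕ):ℤ) + 1 - (I:ℤ))) else 0)
          = (∑ K ∈ Finset.range r, if K ≤ l-1 then (p:ℝ) ^ ((K:ℤ) - ((l-1:ℕ):ℤ)) else 0)
            * (X * ∑ I ∈ Finset.range r, (if l-1 < I then (p:ℝ) ^ (((l-1:ℕ):ℤ) + 1 - (I:ℤ)) else 0)) := by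
        rw [Finset.sum_mul]
        apply Finset.sum_congr rfl
        intro K _
        by_cases hK : K ≤ l-1
        · rw [if_pos hK, Finset.mul_sum, Finset.mul_sum]
          apply Finset.sum_congr rfl
          intro I _
          by_cases hI : l-1 < I <;> simp [hI, hK]
        · rw [if_neg hK, zero_mul]
          apply Finset.sum_eq_zero
          intro I _
          rw [if_neg (by tauto)]
      have hS1 := geomS1 hp3 r (l-1) (by omega)
      have hS2 := geomS2 hp3 r (l-1)
      have hS1n := ifsum_nonneg p r (fun K => K ≤ l-1) (fun K => (K:ℤ) - ((l-1:ℕ):ℤ))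
      have hS2n := ifsum_nonneg p r (fun I => l-1 < I) (fun I => ((l-1:ℕ):ℤ) + 1 - (I:ℤ))
      have hXp : 0 < X := by rw [hXdef]; positivity
      calc crossL p r a l u ≤ _ := step1
        _ = _ := step2
        _ ≤ (3/2) * (X * (3/2)) := by
            apply mul_le_mul hS1 (mul_le_mul_of_nonneg_left hS2 (le_of_lt hXp))
              (mul_nonneg (le_of_lt hXp) hS2n) (by norm_num)
        _ = (9/4) * X := by ring
    have hXX : X ≤ X' * (p:ℝ)⁻¹ * (p:ℝ)⁻¹ := by
      have : X' * (p:ℝ)⁻¹ * (p:ℝ)⁻¹ = (p:ℝ) ^ ((a u - a (u+1)) + (-1) + (-1)) := by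
        rw [zpow_add₀ hPne, zpow_add₀ hPne, zpow_neg_one, hX'def]
      rw [this, hXdef]
      apply zpow_le_zpow_right₀ (le_of_lt hP1)
      linarith
    have hneg := delta_neg2 hp3 (crossR p r a l u) (crossL p r a l u) X' X
      (by rw [hX'def]; positivity) (by rw [hXdef]; positivity) hBlow hAup hXX
    have hsimp : ((p:ℝ) ^ (-(-1:ℤ)) - 1) = ((p:ℝ) - 1) := by norm_num
    have hsimp2 : ((p:ℝ) ^ ((-1:ℤ)) - 1) = ((p:ℝ)⁻¹ - 1) := by rw [zpow_neg_one]
    rw [hsimp, hsimp2] at hdiff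
    linarith


/-- If `(r-1) ∣ s` and `a` minimizes `h_p` over `A(s,r)`, then (with `[q] = ⌊(s-1)/(r-1)⌋`)
`δ(a) = ([q],[q+1],…,[q+1])` or `δ(a) = ([q+1],…,[q+1],[q])`: exactly one entry equals `[q]`,
it is the first or the last, and all other entries equal `[q]+1`. -/
theorem stmt2 (p s r : ℕ) (hpp : p.Prime) (hp3 : 3 ≤ p) (hr : 3 ≤ r) (hrs : r < s)
    (hdvd : (r - 1) ∣ s) (a : ℕ → ℤ) (ha : IsMinimizer p s r a) :
    (∀ j < r - 1, dlt a j =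
        if j = 0 then (((s - 1) / (r - 1) : ℕ) : ℤ) else (((s - 1) / (r - 1) : ℕ) : ℤ) + 1) ∨
    (∀ j < r - 1, dlt a j =
        if j = r - 2 then (((s - 1) / (r - 1) : ℕ) : ℤ) else (((s - 1) / (r - 1) : ℕ) : ℤ) + 1) := by
  obtain ⟨hadm, hmin⟩ := ha
  obtain ⟨t, ht⟩ := hdvd
  have hm2 : 2 ≤ r - 1 := by omega
  have ht2 : 2 ≤ t := by
    rcases Nat.lt_or_ge t 2 with h | h
    · interval_cases t <;> omega
    · exact h
  have hd_pos : ∀ j, j < r - 1 → 0 < a (j+1) - a j := by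
    intro j hj
    have := hadm.2.2 j (by omega)
    linarith
  have hsum : ∑ j ∈ Finset.range (r-1), (a (j+1) - a j) = (s:ℤ) - 1 := by
    rw [Finset.sum_range_sub a (r-1), hadm.2.1, hadm.1, sub_zero]
  have hstep1 : ∀ j k, j < r - 1 → k < r - 1 → a (k+1) - a k ≤ a (j+1) - a j + 1 := by
    intro j k hj hk
    by_contra hcon
    push_neg at hcon
    rcases Nat.lt_trichotomy j k with h | h | h
    · obtain ⟨b, hb, hlt⟩ := cor1 p s r hp3 a hadm (j+1) k (by omega) (by omega) (by omega)
        (by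
          have hji : j + 1 - 1 = j := by omega
          rw [hji]
          linarith)
      linarith [hmin b hb]
    · subst h; linarith
    · obtain ⟨b, hb, hlt⟩ := cor2 p s r hp3 a hadm (k+1) j (by omega) (by omega) (by omega)
        (by
          have hki : k + 1 - 1 = k := by omega
          rw [hki]
          linarith)
      linarith [hmin b hb]
  have hrm : ((r-1:ℕ):ℤ) = (r:ℤ) - 1 := by omega
  have hST : (s:ℤ) - 1 = ((r-1:ℕ):ℤ) * (t:ℤ) - 1 := by
    rw [ht]; push_cast; ring
  have hT2 : (2:ℤ) ≤ (t:ℤ) := by exact_mod_cast ht2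
  have hrange : ∀ j, j < r - 1 → a (j+1) - a j = (t:ℤ) - 1 ∨ a (j+1) - a j = (t:ℤ) := by
    intro j hj
    by_contra hcon
    push_neg at hcon
    obtain ⟨hne1, hne2⟩ := hcon
    rcases lt_or_ge (a (j+1) - a j) (t:ℤ) with h | h
    · have hdj : a (j+1) - a j ≤ (t:ℤ) - 2 := by omega
      have hub : ∑ k ∈ Finset.range (r-1), (a (k+1) - a k)
          ≤ (Finset.range (r-1)).card • ((t:ℤ) - 1) := by
        apply Finset.sum_le_card_nsmul
        intro k hk
        have := hstep1 j k hj (Finset.mem_range.1 hk)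
        omega
      rw [Finset.card_range, nsmul_eq_mul] at hub
      rw [hsum, hST] at hub
      have hrm2 : (2:ℤ) ≤ ((r-1:ℕ):ℤ) := by exact_mod_cast hm2
      nlinarith
    · have hdj : (t:ℤ) + 1 ≤ a (j+1) - a j := by omega
      have hlb : (Finset.range (r-1)).card • ((t:ℤ))
          ≤ ∑ k ∈ Finset.range (r-1), (a (k+1) - a k) := by
        apply Finset.card_nsmul_le_sum
        intro k hk
        have := hstep1 k j (Finset.mem_range.1 hk) hj
        omega
      rw [Finset.card_range, nsmul_eq_mul] at hlb
      rw [hsum, hST] at hlb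
      linarith
  set E : Finset ℕ := (Finset.range (r-1)).filter (fun j => a (j+1) - a j = (t:ℤ) - 1) with hE
  have hsum2 : ∑ j ∈ Finset.range (r-1), (a (j+1) - a j)
      = ((r-1:ℕ):ℤ) * (t:ℤ) - (E.card : ℤ) := by
    have hcong : ∀ j ∈ Finset.range (r-1), a (j+1) - a j
        = (t:ℤ) - (if a (j+1) - a j = (t:ℤ) - 1 then 1 else 0) := by
      intro j hj
      rcases hrange j (Finset.mem_range.1 hj) with h | h
      · rw [h, if_pos rfl]
      · rw [h, if_neg (by omega)]; ring
    rw [Finset.sum_congr rfl hcong, Finset.sum_sub_distrib, Finset.sum_const,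
      Finset.card_range, nsmul_eq_mul, Finset.sum_boole, hE]
  have hcard : E.card = 1 := by
    rw [hsum, hST] at hsum2
    omega
  obtain ⟨e, he⟩ := Finset.card_eq_one.1 hcard
  have heE : e ∈ E := by rw [he]; exact Finset.mem_singleton_self e
  have hem : e < r - 1 := Finset.mem_range.1 (Finset.mem_filter.1 heE).1
  have hde : a (e+1) - a e = (t:ℤ) - 1 := (Finset.mem_filter.1 heE).2
  have hother : ∀ j, j < r - 1 → j ≠ e → a (j+1) - a j = (t:ℤ) := by
    intro j hj hne
    rcases hrange j hj with h | h
    · exfalso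
      have : j ∈ E := Finset.mem_filter.2 ⟨Finset.mem_range.2 hj, h⟩
      rw [he, Finset.mem_singleton] at this
      exact hne this
    · exact h
  have hcf : ∀ i, i < r → a i = (i:ℤ) * (t:ℤ) - (if e < i then 1 else 0) := by
    intro i
    induction i with
    | zero =>
      intro _
      rw [hadm.1, if_neg (by omega)]
      simp
    | succ n ih =>
      intro hn
      have han := ih (by omega)
      have hdn : a (n+1) - a n = if n = e then (t:ℤ) - 1 else (t:ℤ) := by
        by_cases h : n = e
        · rw [if_pos h, h]
          exact hde
        · rw [if_neg h]
          exact hother n (by omega) h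
      by_cases h1 : n = e
      · rw [if_pos h1] at hdn
        rw [if_neg (show ¬ e < n by omega)] at han
        rw [if_pos (show e < n + 1 by omega)]
        push_cast
        linarith
      · rw [if_neg h1] at hdn
        by_cases h2 : e < n
        · rw [if_pos h2] at han
          rw [if_pos (show e < n + 1 by omega)]
          push_cast
          linarith
        · rw [if_neg h2] at han
          rw [if_neg (show ¬ e < n + 1 by omega)]
          push_cast
          linarith
  have hval : (((s-1)/(r-1) : ℕ) : ℤ) = (t:ℤ) - 1 := by
    have hM : r - 1 ≤ (r-1) * t := Nat.le_mul_of_pos_right _ (by omega)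
    have heq : s - 1 = (r-1) * (t-1) + (r-2) := by
      rw [ht, Nat.mul_sub]
      omega
    rw [heq, Nat.mul_add_div (by omega), Nat.div_eq_of_lt (by omega), Nat.add_zero]
    omega
  by_cases he0 : e = 0
  · left
    intro j hj
    unfold dlt
    by_cases hj0 : j = 0
    · rw [if_pos hj0, hval, hj0, ← he0, hde]
    · rw [if_neg hj0, hval, hother j hj (by omega)]
      ring
  · by_cases heM : e = r - 2
    · right
      intro j hj
      unfold dlt
      by_cases hj0 : j = r - 2
      · rw [if_pos hj0, hval, hj0, ← heM, hde]
      · rw [if_neg hj0, hval, hother j hj (by omega)]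
        ring
    · exfalso
      rcases lt_or_ge (2*e) (r-1) with h2e | h2e
      · obtain ⟨b, hb, hlt⟩ := cor3 p s r t hp3 a hadm e (by omega) h2e hr ht2 hcf
        linarith [hmin b hb]
      · obtain ⟨b, hb, hlt⟩ := cor4 p s r t hp3 a hadm e (by omega) h2e hr ht2 hcf
        linarith [hmin b hb]
end

section
/- Let p ≥ 3 be a prime and let 3 ≤ r < s be integers with (r-1) dividing s, so that [q+1] = s/(r-1) where q = (s-1)/(r-1). Then min h_p = (1/(p^{[q+1]} - 1)) · ( r - 1 + (p - 1 - 1/(p^{[q+1]} - 1)) · (1 - 1/p^{[q+1](r-1)}) ). -/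
/-!
Write an admissible tuple through its gaps `d j = a (j+1) - a j ≥ 1` (`n = r - 1` of them,
summing to `s - 1 = n m - 1`), so that `h_p` is the sum of `x ^ (d k + ⋯ + d (i-1))` over all
windows `k < i ≤ n`, with `x = 1/p`. If `d u ≥ d v + 2`, moving one unit from gap `u` to gap
`v` does not increase `h_p` when `x ≤ 1/3`: the windows through `u` only gain a factor `p`
and total at most `x ^ d u / (1-x)^2`, while those through `v` only lose it and total at least
`x ^ d v`. Since the move lowers `∑ d j ^ 2`, some minimiser has all gaps equal to `m` except
one gap `m - 1` at some `t`. The windows through `t` contribute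
`q (1 + ⋯ + q^t)(1 + ⋯ + q^(n-1-t))` with `q = p^(-m)`, which is least for `t = 0`, and the
value there is a geometric sum computation.
-/

open Finset

theorem sum_add_ite_mem_eq {ι M : Type*} [DecidableEq ι] [AddCommMonoid M] {s : Finset ι}
    {f g : ι → M} {u v : ι} {a b : M}
    (h : ∀ j, f j + (if j = u then a else 0) = g j + (if j = v then b else 0)) :
    ∑ j ∈ s, f j + (if u ∈ s then a else 0) = ∑ j ∈ s, g j + (if v ∈ s then b else 0) := by
  rw [← sum_ite_eq' s u (fun _ => a), ← sum_ite_eq' s v (fun _ => b), ← sum_add_distrib,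
    ← sum_add_distrib]
  exact sum_congr rfl fun j _ => h j

theorem le_sum_Ico_of_mem {d : ℕ → ℕ} {k i u : ℕ} (hd : ∀ j ∈ Ico k i, 1 ≤ d j)
    (hu : u ∈ Ico k i) : d u + (i - k - 1) ≤ ∑ j ∈ Ico k i, d j := by
  rw [← add_sum_erase _ _ hu]
  have : #((Ico k i).erase u) • 1 ≤ ∑ j ∈ (Ico k i).erase u, d j :=
    card_nsmul_le_sum _ _ _ fun j hj => hd j (mem_of_mem_erase hj)
  rw [card_erase_of_mem hu, Nat.card_Ico, smul_eq_mul, mul_one] at this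
  omega

theorem geom_sum_le_inv_one_sub {x : ℝ} (hx0 : 0 ≤ x) (hx1 : x < 1) (N : ℕ) :
    ∑ j ∈ range N, x ^ j ≤ (1 - x)⁻¹ := by
  have := geom_sum_Ico_le_of_lt_one (m := 0) (n := N) hx0 hx1
  rwa [← range_eq_Ico, pow_zero, one_div] at this

theorem geom_sum_le_geom_sum_mul_geom_sum {R : Type*} [CommSemiring R] [PartialOrder R]
    [IsOrderedRing R] {y : R} (hy : 0 ≤ y) (a b : ℕ) :
    ∑ j ∈ range (a + b + 1), y ^ j ≤
      (∑ j ∈ range (a + 1), y ^ j) * ∑ j ∈ range (b + 1), y ^ j := by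
  have hlast : y ^ a ≤ ∑ j ∈ range (a + 1), y ^ j :=
    single_le_sum (fun j _ => pow_nonneg hy j) (self_mem_range_succ a)
  rw [add_right_comm, sum_range_add, sum_range_succ' _ b, pow_zero, mul_add, mul_one, mul_sum,
    add_comm (∑ j ∈ range (a + 1), y ^ j)]
  gcongr with j
  calc y ^ (a + 1 + j) = y ^ a * y ^ (j + 1) := by ring
    _ ≤ _ := by gcongr

/-- `h_p` in terms of the gaps `d` of the tuple, with `x = 1/p`: the pair `k < i` of `h_p`
contributes `x ^ (d k + ⋯ + d (i-1))`. -/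
noncomputable def windowSum (x : ℝ) (n : ℕ) (d : ℕ → ℕ) : ℝ :=
  ∑ i ∈ range (n + 1), ∑ k ∈ range i, x ^ ∑ j ∈ Ico k i, d j

theorem windowSum_congr {x : ℝ} {n : ℕ} {d e : ℕ → ℕ} (h : ∀ j < n, d j = e j) :
    windowSum x n d = windowSum x n e := by
  unfold windowSum
  refine sum_congr rfl fun i hi => sum_congr rfl fun k _ => ?_
  rw [sum_congr rfl fun j hj => h j (by simp only [mem_range, mem_Ico] at hi hj; omega)]

theorem sum_windows_ite_mem {M : Type*} [AddCommMonoid M] (f : ℕ → ℕ → M) (n t : ℕ) :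
    ∑ i ∈ range (n + 1), ∑ k ∈ range i, (if t ∈ Ico k i then f i k else 0) =
      ∑ i ∈ Ico (t + 1) (n + 1), ∑ k ∈ range (t + 1), f i k := by
  have inner (i : ℕ) : ∑ k ∈ range i, (if t ∈ Ico k i then f i k else 0) =
      if t < i then ∑ k ∈ range (t + 1), f i k else 0 := by
    split_ifs with hti
    · rw [← sum_filter]
      congr 1
      ext k
      simp only [mem_filter, mem_range, mem_Ico]
      omega
    · exact sum_eq_zero fun k _ => if_neg (by simp only [mem_Ico]; omega)
  rw [sum_congr rfl fun i _ => inner i, ← sum_filter]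
  congr 1
  ext i
  simp only [mem_filter, mem_range, mem_Ico]
  omega

theorem sum_Ico_sum_range_pow_sub {R : Type*} [CommSemiring R] (y : R) (n t : ℕ) :
    ∑ i ∈ Ico (t + 1) (n + 1), ∑ k ∈ range (t + 1), y ^ (i - k) =
      y * (∑ j ∈ range (t + 1), y ^ j) * ∑ j ∈ range (n - t), y ^ j := by
  have split : ∀ i ∈ Ico (t + 1) (n + 1), ∀ k ∈ range (t + 1),
      y ^ (i - k) = y ^ (i - (t + 1)) * (y * y ^ (t - k)) := by
    intro i hi k hk
    simp only [mem_Ico, mem_range] at hi hk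
    rw [← pow_succ', ← pow_add]
    congr 1
    omega
  rw [sum_congr rfl fun i hi => sum_congr rfl fun k hk => split i hi k hk, ← sum_mul_sum,
    ← mul_sum, sum_Ico_eq_sum_range, ← sum_range_reflect (fun j => y ^ j)]
  simp only [Nat.add_sub_cancel_left, Nat.add_sub_add_right, Nat.add_sub_cancel]
  ring

theorem sum_windows_mem_le {x : ℝ} (hx0 : 0 ≤ x) (hx : x ≤ 1 / 3) {n : ℕ} {d : ℕ → ℕ}
    (hd : ∀ j < n, 1 ≤ d j) (u : ℕ) :
    ∑ i ∈ range (n + 1), ∑ k ∈ range i,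
      (if u ∈ Ico k i then x ^ ∑ j ∈ Ico k i, d j else 0) ≤ x ^ (d u - 1) := by
  have hx1 : x < 1 := by linarith
  have h₁ := geom_sum_le_inv_one_sub hx0 hx1 (u + 1)
  have h₂ := geom_sum_le_inv_one_sub hx0 hx1 (n - u)
  have hG : x * (1 - x)⁻¹ * (1 - x)⁻¹ ≤ 1 := by
    rw [mul_assoc, ← mul_inv, ← sq, ← div_eq_mul_inv, div_le_one (by nlinarith)]
    nlinarith
  calc _ ≤ ∑ i ∈ range (n + 1), ∑ k ∈ range i,
        if u ∈ Ico k i then x ^ (d u - 1) * x ^ (i - k) else 0 := by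
        refine sum_le_sum fun i hi => sum_le_sum fun k _ => ?_
        split_ifs with h
        · rw [← pow_add]
          refine pow_le_pow_of_le_one hx0 hx1.le ?_
          rw [mem_range] at hi
          have hku := mem_Ico.1 h
          have := le_sum_Ico_of_mem (fun j hj => hd j (by rw [mem_Ico] at hj; omega)) h
          have := hd u (by omega)
          omega
        · rfl
    _ = x ^ (d u - 1) * (x * (∑ j ∈ range (u + 1), x ^ j) * ∑ j ∈ range (n - u), x ^ j) := by
        rw [sum_windows_ite_mem, ← sum_Ico_sum_range_pow_sub, mul_sum]
        simp only [mul_sum]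
    _ ≤ x ^ (d u - 1) * (x * (1 - x)⁻¹ * (1 - x)⁻¹) := by gcongr
    _ ≤ x ^ (d u - 1) := mul_le_of_le_one_right (by positivity) hG

theorem pow_le_sum_windows_mem_not_mem {x : ℝ} (hx0 : 0 ≤ x) {n : ℕ} {d : ℕ → ℕ} {u v : ℕ}
    (hv : v < n) (huv : u ≠ v) :
    x ^ d v ≤ ∑ i ∈ range (n + 1), ∑ k ∈ range i,
      (if v ∈ Ico k i ∧ u ∉ Ico k i then x ^ ∑ j ∈ Ico k i, d j else 0) := by
  have hvv : v ∈ Ico v (v + 1) ∧ u ∉ Ico v (v + 1) := by simp only [mem_Ico]; omega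
  calc x ^ d v = if v ∈ Ico v (v + 1) ∧ u ∉ Ico v (v + 1) then
        x ^ ∑ j ∈ Ico v (v + 1), d j else 0 := by
        rw [if_pos hvv, Nat.Ico_succ_singleton, sum_singleton]
    _ ≤ ∑ k ∈ range (v + 1), if v ∈ Ico k (v + 1) ∧ u ∉ Ico k (v + 1) then
        x ^ ∑ j ∈ Ico k (v + 1), d j else 0 :=
        single_le_sum (f := fun k => if v ∈ Ico k (v + 1) ∧ u ∉ Ico k (v + 1) then
          x ^ ∑ j ∈ Ico k (v + 1), d j else 0) (fun k _ => by positivity)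
          (self_mem_range_succ v)
    _ ≤ _ := single_le_sum (f := fun i => ∑ k ∈ range i, if v ∈ Ico k i ∧ u ∉ Ico k i then
          x ^ ∑ j ∈ Ico k i, d j else 0) (fun i _ => sum_nonneg fun k _ => by positivity)
          (mem_range.2 (by omega : v + 1 < n + 1))

def moveUnit (d : ℕ → ℕ) (u v : ℕ) : ℕ → ℕ :=
  fun j => if j = u then d u - 1 else if j = v then d v + 1 else d j

section moveUnit

variable {d : ℕ → ℕ} {u v : ℕ}

theorem moveUnit_add_ite (huv : u ≠ v) (hu : 1 ≤ d u) (j : ℕ) :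
    moveUnit d u v j + (if j = u then 1 else 0) = d j + (if j = v then 1 else 0) := by
  unfold moveUnit
  split_ifs with h1 h2 <;> subst_vars <;> omega

theorem moveUnit_sq_add_ite (huv : u ≠ v) (hu : 1 ≤ d u) (j : ℕ) :
    moveUnit d u v j ^ 2 + (if j = u then 2 * d u - 1 else 0) =
      d j ^ 2 + (if j = v then 2 * d v + 1 else 0) := by
  obtain ⟨c, hc⟩ : ∃ c, d u = c + 1 := ⟨d u - 1, by omega⟩
  unfold moveUnit
  by_cases hju : j = u
  · subst hju
    rw [if_pos rfl, if_pos rfl, if_neg huv, hc, show 2 * (c + 1) - 1 = 2 * c + 1 by omega,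
      Nat.add_sub_cancel]
    ring
  by_cases hjv : j = v
  · subst hjv
    simp only [hju, if_true, if_false]
    ring
  · simp only [hju, hjv, if_false]

theorem sum_sq_moveUnit_lt {n : ℕ} (hu : u < n) (hv : v < n) (huv : d v + 2 ≤ d u) :
    ∑ j ∈ range n, moveUnit d u v j ^ 2 < ∑ j ∈ range n, d j ^ 2 := by
  have h := sum_add_ite_mem_eq (s := range n) (moveUnit_sq_add_ite (d := d) (u := u) (v := v)
    (by rintro rfl; omega) (by omega))
  rw [if_pos (mem_range.2 hu), if_pos (mem_range.2 hv)] at h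
  have : 2 * d v + 1 < 2 * d u - 1 := by omega
  linarith

theorem mul_pow_sum_moveUnit {x : ℝ} (huv : u ≠ v) (hu : 1 ≤ d u) (s : Finset ℕ) :
    x * x ^ ∑ j ∈ s, moveUnit d u v j = x * x ^ ∑ j ∈ s, d j
      + (1 - x) * (if u ∈ s ∧ v ∉ s then x ^ ∑ j ∈ s, d j else 0)
      - x * (1 - x) * (if v ∈ s ∧ u ∉ s then x ^ ∑ j ∈ s, d j else 0) := by
  have h := sum_add_ite_mem_eq (s := s) (moveUnit_add_ite huv hu)
  by_cases hus : u ∈ s <;> by_cases hvs : v ∈ s <;> simp only [hus, hvs, if_true, if_false,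
    not_true, not_false_eq_true, and_true, and_false, add_zero] at h ⊢
  · rw [show ∑ j ∈ s, moveUnit d u v j = ∑ j ∈ s, d j by omega]; ring
  · rw [← h, pow_succ]; ring
  · rw [h, pow_succ]; ring
  · rw [h]; ring

theorem windowSum_moveUnit_le {x : ℝ} (hx0 : 0 < x) (hx : x ≤ 1 / 3) {n : ℕ}
    (hd : ∀ j < n, 1 ≤ d j) (hv : v < n) (huv : d v + 2 ≤ d u) :
    windowSum x n (moveUnit d u v) ≤ windowSum x n d := by
  set A := ∑ i ∈ range (n + 1), ∑ k ∈ range i,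
    if u ∈ Ico k i ∧ v ∉ Ico k i then x ^ ∑ j ∈ Ico k i, d j else 0
  set B := ∑ i ∈ range (n + 1), ∑ k ∈ range i,
    if v ∈ Ico k i ∧ u ∉ Ico k i then x ^ ∑ j ∈ Ico k i, d j else 0
  have hne : u ≠ v := by rintro rfl; omega
  have hsplit : x * windowSum x n (moveUnit d u v) =
      x * windowSum x n d + (1 - x) * (A - x * B) := by
    simp only [windowSum, mul_sum, mul_pow_sum_moveUnit (x := x) hne (show 1 ≤ d u by omega),
      sum_add_distrib, sum_sub_distrib]
    simp only [← mul_sum, A, B]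
    ring
  have hAB : A ≤ x * B :=
    calc A ≤ ∑ i ∈ range (n + 1), ∑ k ∈ range i,
          (if u ∈ Ico k i then x ^ ∑ j ∈ Ico k i, d j else 0) := by
          refine sum_le_sum fun i _ => sum_le_sum fun k _ => ?_
          split_ifs with h h'
          · rfl
          · exact absurd h.1 h'
          · positivity
          · rfl
      _ ≤ x ^ (d u - 1) := sum_windows_mem_le hx0.le hx hd u
      _ ≤ x ^ (d v + 1) := pow_le_pow_of_le_one hx0.le (by linarith) (by omega)
      _ ≤ x * B := by
          rw [pow_succ']
          exact mul_le_mul_of_nonneg_left (pow_le_sum_windows_mem_not_mem hx0.le hv hne) hx0.le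
  have : (1 - x) * (A - x * B) ≤ 0 := mul_nonpos_of_nonneg_of_nonpos (by linarith) (by linarith)
  exact le_of_mul_le_mul_left (by linarith) hx0

end moveUnit

theorem exists_balanced_windowSum_le {x : ℝ} (hx0 : 0 < x) (hx : x ≤ 1 / 3) {n : ℕ}
    (d : ℕ → ℕ) (hd : ∀ j < n, 1 ≤ d j) :
    ∃ e : ℕ → ℕ, (∀ i < n, ∀ j < n, e i ≤ e j + 1) ∧
      ∑ j ∈ range n, e j = ∑ j ∈ range n, d j ∧ windowSum x n e ≤ windowSum x n d := by
  by_cases h : ∃ u < n, ∃ v < n, d v + 2 ≤ d u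
  · obtain ⟨u, hu, v, hv, huv⟩ := h
    have hne : u ≠ v := by rintro rfl; omega
    have hd' : ∀ j < n, 1 ≤ moveUnit d u v j := by
      intro j hj
      unfold moveUnit
      split_ifs
      · omega
      · omega
      · exact hd j hj
    have hsum : ∑ j ∈ range n, moveUnit d u v j = ∑ j ∈ range n, d j := by
      have := sum_add_ite_mem_eq (s := range n) (moveUnit_add_ite hne (show 1 ≤ d u by omega))
      rwa [if_pos (mem_range.2 hu), if_pos (mem_range.2 hv), add_left_inj] at this
    have hdec := sum_sq_moveUnit_lt hu hv huv
    obtain ⟨e, he, hesum, hle⟩ := exists_balanced_windowSum_le hx0 hx (moveUnit d u v) hd'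
    exact ⟨e, he, hesum.trans hsum, hle.trans (windowSum_moveUnit_le hx0 hx hd hv huv)⟩
  · push Not at h
    exact ⟨d, fun i hi j hj => by have := h i hi j hj; omega, rfl, le_rfl⟩
termination_by ∑ j ∈ range n, d j ^ 2

def balancedGaps (m t : ℕ) : ℕ → ℕ := fun j => if j = t then m - 1 else m

theorem sum_balancedGaps_add {m : ℕ} (hm : 1 ≤ m) (t : ℕ) (s : Finset ℕ) :
    ∑ j ∈ s, balancedGaps m t j + (if t ∈ s then 1 else 0) = #s * m := by
  have := sum_add_ite_mem_eq (s := s) (f := balancedGaps m t) (g := fun _ => m) (u := t)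
    (v := t) (a := 1) (b := 0) fun j => by unfold balancedGaps; split_ifs <;> omega
  simpa using this

theorem exists_eq_balancedGaps {n m : ℕ} {d : ℕ → ℕ} (hbal : ∀ i < n, ∀ j < n, d i ≤ d j + 1)
    (hsum : ∑ j ∈ range n, d j + 1 = n * m) : ∃ t < n, ∀ j < n, d j = balancedGaps m t j := by
  have hm : 1 ≤ m := Nat.pos_of_ne_zero fun h => by simp [h] at hsum
  obtain ⟨t, ht, hdt⟩ : ∃ t < n, d t < m := by
    by_contra! h
    have : #(range n) • m ≤ ∑ j ∈ range n, d j :=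
      card_nsmul_le_sum _ _ _ fun j hj => h j (mem_range.1 hj)
    rw [card_range, smul_eq_mul] at this
    omega
  have hle : ∀ j ∈ range n, d j ≤ balancedGaps m t j := by
    intro j hj
    have := hbal j (mem_range.1 hj) t ht
    unfold balancedGaps
    split_ifs <;> subst_vars <;> omega
  have heq : ∑ j ∈ range n, d j = ∑ j ∈ range n, balancedGaps m t j := by
    have := sum_balancedGaps_add hm t (range n)
    rw [if_pos (mem_range.2 ht), card_range] at this
    omega
  exact ⟨t, ht, fun j hj => (sum_eq_sum_iff_of_le hle).1 heq j (mem_range.2 hj)⟩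

theorem mul_windowSum_balancedGaps {x : ℝ} {m : ℕ} (hm : 1 ≤ m) (n t : ℕ) :
    x * windowSum x n (balancedGaps m t) =
      x * ∑ i ∈ range (n + 1), ∑ k ∈ range i, (x ^ m) ^ (i - k) +
        (1 - x) * (x ^ m * (∑ j ∈ range (t + 1), (x ^ m) ^ j) *
          ∑ j ∈ range (n - t), (x ^ m) ^ j) := by
  rw [← sum_Ico_sum_range_pow_sub, ← sum_windows_ite_mem]
  simp only [windowSum, mul_sum, ← sum_add_distrib]
  refine sum_congr rfl fun i _ => sum_congr rfl fun k _ => ?_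
  have h := sum_balancedGaps_add hm t (Ico k i)
  rw [Nat.card_Ico] at h
  rw [← pow_mul, mul_comm m, ← h]
  split_ifs
  · rw [pow_succ]; ring
  · rw [add_zero]; ring

theorem windowSum_balancedGaps_zero_le_of_lt {x : ℝ} (hx0 : 0 < x) (hx1 : x ≤ 1) {m : ℕ}
    (hm : 1 ≤ m) {n t : ℕ} (ht : t < n) :
    windowSum x n (balancedGaps m 0) ≤ windowSum x n (balancedGaps m t) := by
  have key := geom_sum_le_geom_sum_mul_geom_sum (y := x ^ m) (by positivity) t (n - 1 - t)
  rw [show t + (n - 1 - t) + 1 = n by omega, show n - 1 - t + 1 = n - t by omega] at key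
  refine le_of_mul_le_mul_left ?_ hx0
  rw [mul_windowSum_balancedGaps hm, mul_windowSum_balancedGaps hm, zero_add, sum_range_one,
    pow_zero, mul_one, Nat.sub_zero, mul_assoc (x ^ m)]
  gcongr

theorem windowSum_balancedGaps_zero_le_windowSum {x : ℝ} (hx0 : 0 < x) (hx : x ≤ 1 / 3)
    {n m : ℕ} {d : ℕ → ℕ} (hd : ∀ j < n, 1 ≤ d j) (hsum : ∑ j ∈ range n, d j + 1 = n * m) :
    windowSum x n (balancedGaps m 0) ≤ windowSum x n d := by
  obtain ⟨e, hbal, hesum, hle⟩ := exists_balanced_windowSum_le hx0 hx d hd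
  obtain ⟨t, ht, he⟩ := exists_eq_balancedGaps hbal (hesum ▸ hsum)
  have hm : 1 ≤ m := Nat.pos_of_ne_zero fun h => by simp [h] at hsum
  calc windowSum x n (balancedGaps m 0) ≤ windowSum x n (balancedGaps m t) :=
        windowSum_balancedGaps_zero_le_of_lt hx0 (by linarith) hm ht
    _ = windowSum x n e := (windowSum_congr he).symm
    _ ≤ windowSum x n d := hle

theorem one_sub_mul_sum_windows_pow (y : ℝ) (n : ℕ) :
    (1 - y) * ∑ i ∈ range (n + 1), ∑ k ∈ range i, y ^ (i - k) =
      y * (n - y * ∑ j ∈ range n, y ^ j) := by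
  have inner (i : ℕ) : ∑ k ∈ range i, y ^ (i - k) = y * ∑ j ∈ range i, y ^ j := by
    rw [mul_sum, ← sum_range_reflect]
    refine sum_congr rfl fun k hk => ?_
    rw [← pow_succ']
    congr 1
    rw [mem_range] at hk
    omega
  rw [sum_congr rfl fun i _ => inner i, ← mul_sum, mul_left_comm, mul_sum]
  simp only [mul_neg_geom_sum, sum_sub_distrib, sum_const, card_range, nsmul_eq_mul, mul_one]
  rw [geom_sum_succ]
  push_cast
  ring

theorem windowSum_inv_balancedGaps_zero {P : ℝ} (hP : 1 < P) {m : ℕ} (hm : 1 ≤ m) (n : ℕ) :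
    windowSum P⁻¹ n (balancedGaps m 0) =
      1 / (P ^ m - 1) * (n + (P - 1 - 1 / (P ^ m - 1)) * (1 - 1 / P ^ (m * n))) := by
  have h := mul_windowSum_balancedGaps (x := P⁻¹) hm n 0
  rw [zero_add, sum_range_one, pow_zero, mul_one, Nat.sub_zero] at h
  have hS := one_sub_mul_sum_windows_pow (P⁻¹ ^ m) n
  have hg := mul_neg_geom_sum (P⁻¹ ^ m) n
  have hQ : 1 < P ^ m := one_lt_pow₀ hP (by omega)
  rw [inv_pow] at h hS hg
  rw [pow_mul, one_div (_ ^ n), ← inv_pow]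
  set Q := P ^ m
  have hP0 : P ≠ 0 := by positivity
  have hQ0 : Q ≠ 0 := by positivity
  have hQ1 : Q - 1 ≠ 0 := by linarith
  field_simp at h hS hg ⊢
  refine mul_left_cancel₀ hQ0 ?_
  linear_combination (Q - 1) ^ 2 * h + (Q - 1) * hS + ((P - 1) * (Q - 1) - 1) * hg

def gaps (a : ℕ → ℤ) (j : ℕ) : ℕ := (a (j + 1) - a j).toNat

def ofGaps (d : ℕ → ℕ) (i : ℕ) : ℤ := ∑ j ∈ range i, (d j : ℤ)

theorem gaps_ofGaps (d : ℕ → ℕ) : gaps (ofGaps d) = d := by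
  funext j
  simp [gaps, ofGaps, sum_range_succ]

theorem sum_Ico_gaps {a : ℕ → ℤ} {k i : ℕ} (hki : k ≤ i) (ha : ∀ j ∈ Ico k i, a j < a (j + 1)) :
    ∑ j ∈ Ico k i, (gaps a j : ℤ) = a i - a k := by
  rw [← sum_Ico_sub a hki]
  refine sum_congr rfl fun j hj => ?_
  have := ha j hj
  unfold gaps
  omega

theorem hp_eq_windowSum (p n : ℕ) {a : ℕ → ℤ} (ha : ∀ j < n, a j < a (j + 1)) :
    hp p (n + 1) a = windowSum (p : ℝ)⁻¹ n (gaps a) := by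
  rw [hp, sum_comm]
  refine sum_congr rfl fun i hi => ?_
  rw [mem_range] at hi
  rw [← sum_filter, show (range (n + 1)).filter (· < i) = range i by ext; simp; omega]
  refine sum_congr rfl fun k hk => ?_
  rw [mem_range] at hk
  have := sum_Ico_gaps hk.le fun j hj => ha j (by simp only [mem_Ico] at hj; omega)
  rw [show a k - a i = -((∑ j ∈ Ico k i, gaps a j : ℕ) : ℤ) by push_cast; omega, zpow_neg,
    zpow_natCast, inv_pow]

theorem Admissible.one_le_gaps {s r : ℕ} {a : ℕ → ℤ} (ha : Admissible s r a) :
    ∀ j < r - 1, 1 ≤ gaps a j := by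
  intro j hj
  have := ha.2.2 j (by omega)
  unfold gaps
  omega

theorem Admissible.sum_gaps_add_one {s r : ℕ} {a : ℕ → ℤ} (ha : Admissible s r a) :
    ∑ j ∈ range (r - 1), gaps a j + 1 = s := by
  obtain ⟨h0, hlast, hmono⟩ := ha
  have := sum_Ico_gaps (Nat.zero_le (r - 1)) fun j hj =>
    hmono j (by simp only [mem_Ico] at hj; omega)
  rw [← range_eq_Ico, hlast, h0] at this
  zify
  linarith

theorem admissible_ofGaps {s r : ℕ} {d : ℕ → ℕ} (hd : ∀ j < r - 1, 1 ≤ d j)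
    (hsum : ∑ j ∈ range (r - 1), d j + 1 = s) : Admissible s r (ofGaps d) := by
  refine ⟨by simp [ofGaps], ?_, fun i hi => ?_⟩
  · rw [ofGaps, ← hsum]
    push_cast
    ring
  · have := hd i (by omega)
    simp only [ofGaps, sum_range_succ]
    omega

theorem stmt3_general (p s r : ℕ) (hp3 : 3 ≤ p) (hrs : r < s)
    (hdvd : (r - 1) ∣ s) :
    IsLeast {x : ℝ | ∃ a : ℕ → ℤ, Admissible s r a ∧ hp p r a = x}
      ((1 / ((p : ℝ) ^ (s / (r - 1)) - 1)) *
        ((r : ℝ) - 1 + ((p : ℝ) - 1 - 1 / ((p : ℝ) ^ (s / (r - 1)) - 1)) *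
          (1 - 1 / (p : ℝ) ^ ((s / (r - 1)) * (r - 1))))) := by
  obtain ⟨m, rfl⟩ := hdvd
  obtain ⟨n, rfl⟩ : ∃ n, r = n + 1 := ⟨r - 1, by cases r <;> simp_all⟩
  rw [Nat.add_sub_cancel] at hrs ⊢
  have hn : 0 < n := Nat.pos_of_ne_zero fun h => by simp [h] at hrs
  have hm : 2 ≤ m := by by_contra! h; interval_cases m <;> simp at hrs
  have hP : (1 : ℝ) < p := by exact_mod_cast (by omega : 1 < p)
  have hx : (p : ℝ)⁻¹ ≤ 1 / 3 := by
    rw [one_div]; exact inv_anti₀ (by norm_num) (by exact_mod_cast hp3)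
  rw [Nat.mul_div_cancel_left m hn, Nat.cast_add_one, add_sub_cancel_right,
    ← windowSum_inv_balancedGaps_zero hP (by omega) n]
  have hsum : ∑ j ∈ range n, balancedGaps m 0 j + 1 = n * m := by
    simpa [hn] using sum_balancedGaps_add (by omega : 1 ≤ m) 0 (range n)
  refine ⟨⟨ofGaps (balancedGaps m 0), ?_⟩, ?_⟩
  · have ha := admissible_ofGaps (s := n * m) (r := n + 1)
      (fun j _ => by unfold balancedGaps; split_ifs <;> omega) hsum
    refine ⟨ha, ?_⟩
    rw [hp_eq_windowSum p n fun j hj => ha.2.2 j (by omega), gaps_ofGaps]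
  · rintro _ ⟨a, ha, rfl⟩
    rw [hp_eq_windowSum p n fun j hj => ha.2.2 j (by omega)]
    exact windowSum_balancedGaps_zero_le_windowSum (by positivity) hx ha.one_le_gaps
      ha.sum_gaps_add_one

/-- If `(r-1) ∣ s` and `m = s/(r-1) = [q+1]`, then
`min h_p = (1/(p^m-1)) (r - 1 + (p - 1 - 1/(p^m-1))(1 - 1/p^{m(r-1)}))`,
expressed as: this value is the least element of the set of values of `h_p` on `A(s,r)`. -/
theorem stmt3 (p s r : ℕ) (hpp : p.Prime) (hp3 : 3 ≤ p) (hr : 3 ≤ r) (hrs : r < s)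
    (hdvd : (r - 1) ∣ s) :
    IsLeast {x : ℝ | ∃ a : ℕ → ℤ, Admissible s r a ∧ hp p r a = x}
      ((1 / ((p : ℝ) ^ (s / (r - 1)) - 1)) *
        ((r : ℝ) - 1 + ((p : ℝ) - 1 - 1 / ((p : ℝ) ^ (s / (r - 1)) - 1)) *
          (1 - 1 / (p : ℝ) ^ ((s / (r - 1)) * (r - 1))))) :=
  stmt3_general p s r hp3 hrs hdvd
end

section
/- Let p be a prime and let 3 ≤ r < s be integers. If a ∈ A(s,r) satisfies h_p(a) = min h_p, then δ(a) ∈ Biv(s,r); that is, the maximal entry and the minimal entry of the delta vector of any minimizer of h_p differ by at most 1. -/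
lemma geomAux (P : ℝ) (hP : 2 ≤ P) (n : ℕ) : ∑ t ∈ Finset.range n, (P⁻¹) ^ t < P := by
  have h0 : (0:ℝ) < P := by linarith
  have hx0 : (0:ℝ) < P⁻¹ := by positivity
  calc ∑ t ∈ Finset.range n, (P⁻¹) ^ t ≤ ∑ t ∈ Finset.range n, ((2:ℝ)⁻¹) ^ t := by
        apply Finset.sum_le_sum
        intro t _
        apply pow_le_pow_left₀ (le_of_lt hx0)
        rw [inv_le_inv₀ h0 (by norm_num)]
        exact hP
    _ < 2 := by
        have := geom_sum_eq (by norm_num : ((2:ℝ)⁻¹) ≠ 1) n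
        rw [this]
        have h2 : (0:ℝ) < ((2:ℝ)⁻¹) ^ n := by positivity
        rw [div_lt_iff_of_neg (by norm_num : ((2:ℝ)⁻¹ - 1) < 0)]
        linarith
    _ ≤ P := hP

lemma adm_step {r : ℕ} {a : ℕ → ℤ} (h : ∀ i, i + 1 < r → a i < a (i+1)) :
    ∀ m t : ℕ, m + t < r → a m + t ≤ a (m + t) := by
  intro m t
  induction t with
  | zero => simp
  | succ t ih =>
    intro hlt
    have h1 := ih (by omega)
    have h2 := h (m+t) (by omega)
    have e : m + (t+1) = (m+t)+1 := by omega
    rw [e]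
    push_cast
    omega

lemma arith_prog {a : ℕ → ℤ} {K J : ℕ} {g : ℤ}
    (hg : ∀ m, K < m → m < J → a (m+1) - a m = g) :
    ∀ k, K + 1 ≤ k → k ≤ J → a k = a (K+1) + ((k:ℤ) - (K:ℤ) - 1) * g := by
  have main : ∀ t : ℕ, K + 1 + t ≤ J → a (K+1+t) = a (K+1) + (t:ℤ) * g := by
    intro t
    induction t with
    | zero => simp
    | succ t ih =>
      intro hle
      have h1 := ih (by omega)
      have h2 := hg (K+1+t) (by omega) (by omega)
      have e : K+1+(t+1) = (K+1+t)+1 := by omega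
      rw [e]
      push_cast
      linear_combination h1 + h2
  intro k hk1 hk2
  have e : k = K + 1 + (k - (K+1)) := by omega
  have h := main (k - (K+1)) (by omega)
  rw [← e] at h
  rw [h]
  have : ((k - (K+1) : ℕ) : ℤ) = (k:ℤ) - K - 1 := by omega
  rw [this]

noncomputable def fpair (p : ℕ) (c : ℕ → ℤ) (x : ℕ × ℕ) : ℝ :=
  if x.1 < x.2 then (p:ℝ) ^ (c x.1 - c x.2) else 0

lemma hp_eq_sum_pair (p r : ℕ) (c : ℕ → ℤ) :
    hp p r c = ∑ x ∈ Finset.range r ×ˢ Finset.range r, fpair p c x := by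
  rw [hp, Finset.sum_product]
  rfl

lemma sum_le_of_subset_nonpos {α : Type*} [DecidableEq α] {s t : Finset α} (h : s ⊆ t)
    (f : α → ℝ) (h0 : ∀ x ∈ t, x ∉ s → f x ≤ 0) : ∑ x ∈ t, f x ≤ ∑ x ∈ s, f x := by
  have := Finset.sum_le_sum_of_subset_of_nonneg (f := fun x => -f x) h
    (fun x hx hnx => by simpa using h0 x hx hnx)
  simpa using this

lemma main_case (p s r : ℕ) (hpp : p.Prime) (a : ℕ → ℤ)
    (ha : IsMinimizer p s r a) (K J : ℕ) (hKJ : K < J) (hJ : J + 1 < r)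
    (hd : dlt a K + 2 ≤ dlt a J)
    (hmid : ∀ m, K < m → m < J → dlt a m = dlt a K + 1) : False := by
  obtain ⟨⟨ha0, har, hinc⟩, hmin⟩ := ha
  have hP2 : (2:ℝ) ≤ (p:ℝ) := by exact_mod_cast hpp.two_le
  have hP0 : (0:ℝ) < (p:ℝ) := by linarith
  have hP1 : (1:ℝ) ≤ (p:ℝ) := by linarith
  have hPne : (p:ℝ) ≠ 0 := ne_of_gt hP0
  simp only [dlt] at hd hmid
  set g : ℤ := a (K+1) - a K + 1 with hgdef
  have hg2 : 2 ≤ g := by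
    have := hinc K (by omega)
    omega
  have hgapK : a (K+1) - a K = g - 1 := by omega
  have hgapJ : g + 1 ≤ a (J+1) - a J := by omega
  have hmid' : ∀ m, K < m → m < J → a (m+1) - a m = g := by
    intro m h1 h2
    have := hmid m h1 h2
    omega
  have hF1 : ∀ k, K + 1 ≤ k → k ≤ J → a k = a (K+1) + ((k:ℤ) - K - 1) * g :=
    arith_prog hmid'
  set B : Finset ℕ := Finset.Icc (K+1) J with hBdef
  set b : ℕ → ℤ := fun i => if i ∈ B then a i + 1 else a i with hbdef
  have hbin : ∀ i, i ∈ B → b i = a i + 1 := fun i hi => by simp [hbdef, hi]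
  have hbout : ∀ i, i ∉ B → b i = a i := fun i hi => by simp [hbdef, hi]
  have hb : Admissible s r b := by
    refine ⟨?_, ?_, ?_⟩
    · rw [hbout 0 (by simp [hBdef]), ha0]
    · rw [hbout (r-1) (by simp [hBdef, Finset.mem_Icc]; omega), har]
    · intro i hi
      have hii := hinc i hi
      by_cases h1 : i ∈ B <;> by_cases h2 : i + 1 ∈ B
      · rw [hbin i h1, hbin _ h2]; omega
      · rw [hbin i h1, hbout _ h2]
        simp only [hBdef, Finset.mem_Icc] at h1 h2
        have hiJ : i = J := by omega
        subst hiJ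
        omega
      · rw [hbout i h1, hbin _ h2]; omega
      · rw [hbout i h1, hbout _ h2]; omega
  set rect1 : Finset (ℕ × ℕ) := Finset.range (K+1) ×ˢ B with hr1
  set rect2 : Finset (ℕ × ℕ) := B ×ˢ Finset.Ico (J+1) r with hr2
  have hdisj : Disjoint rect1 rect2 := by
    rw [Finset.disjoint_left]
    rintro ⟨k,i⟩ h1 h2
    simp only [hr1, hr2, hBdef, Finset.mem_product, Finset.mem_range, Finset.mem_Icc,
      Finset.mem_Ico] at h1 h2
    omega
  have hsub : rect1 ∪ rect2 ⊆ Finset.range r ×ˢ Finset.range r := by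
    rintro ⟨k,i⟩ hx
    simp only [Finset.mem_union, hr1, hr2, hBdef, Finset.mem_product, Finset.mem_range,
      Finset.mem_Icc, Finset.mem_Ico] at hx ⊢
    omega
  have hzero : ∀ x ∈ Finset.range r ×ˢ Finset.range r, x ∉ rect1 ∪ rect2 →
      fpair p b x - fpair p a x = 0 := by
    rintro ⟨k,i⟩ hx hnx
    simp only [Finset.mem_product, Finset.mem_range] at hx
    simp only [Finset.mem_union, hr1, hr2, hBdef, Finset.mem_product, Finset.mem_range,
      Finset.mem_Icc, Finset.mem_Ico, not_or] at hnx
    by_cases hki : k < i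
    · have hbb : b k - b i = a k - a i := by
        simp only [hbdef, hBdef, Finset.mem_Icc]
        split_ifs with u1 u2 u2
        · ring
        · exfalso; omega
        · exfalso; omega
        · ring
      simp only [fpair, if_pos hki, hbb]
      ring
    · simp [fpair, hki]
  have hkey : hp p r b - hp p r a
      = ∑ x ∈ rect1, (fpair p b x - fpair p a x)
        + ∑ x ∈ rect2, (fpair p b x - fpair p a x) := by
    rw [hp_eq_sum_pair, hp_eq_sum_pair, ← Finset.sum_sub_distrib,
        ← Finset.sum_union hdisj]
    exact (Finset.sum_subset hsub hzero).symm
  -- rect1 bound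
  have hval1 : ∀ x ∈ rect1, fpair p b x - fpair p a x
      = (p:ℝ) ^ (a x.1 - a x.2 - 1) - (p:ℝ) ^ (a x.1 - a x.2) := by
    rintro ⟨k,i⟩ hx
    simp only [hr1, hBdef, Finset.mem_product, Finset.mem_range, Finset.mem_Icc] at hx
    have hki : k < i := by omega
    have h1 : b k = a k := hbout k (by simp [hBdef, Finset.mem_Icc]; omega)
    have h2 : b i = a i + 1 := hbin i (by simp [hBdef, Finset.mem_Icc]; omega)
    simp only [fpair, if_pos hki, h1, h2]
    have e : a k - (a i + 1) = a k - a i - 1 := by ring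
    rw [e]
  have hsub1 : ({K} : Finset ℕ) ×ˢ B ⊆ rect1 := by
    rintro ⟨k,i⟩ hx
    simp only [Finset.mem_product, Finset.mem_singleton] at hx
    simp only [hr1, Finset.mem_product, Finset.mem_range]
    exact ⟨by omega, hx.2⟩
  have hbound1 : ∑ x ∈ rect1, (fpair p b x - fpair p a x)
      ≤ ∑ i ∈ B, ((p:ℝ) ^ (a K - a i - 1) - (p:ℝ) ^ (a K - a i)) := by
    rw [Finset.sum_congr rfl hval1]
    have h2 : ∑ x ∈ ({K} : Finset ℕ) ×ˢ B,
        ((p:ℝ) ^ (a x.1 - a x.2 - 1) - (p:ℝ) ^ (a x.1 - a x.2))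
        = ∑ i ∈ B, ((p:ℝ) ^ (a K - a i - 1) - (p:ℝ) ^ (a K - a i)) := by
      rw [Finset.sum_product, Finset.sum_singleton]
    rw [← h2]
    apply sum_le_of_subset_nonpos hsub1
    intro x _ _
    have := zpow_le_zpow_right₀ hP1 (show a x.1 - a x.2 - 1 ≤ a x.1 - a x.2 by omega)
    linarith
  -- rect2 value
  have hrect2 : ∑ x ∈ rect2, (fpair p b x - fpair p a x)
      = ∑ k ∈ B, ∑ i ∈ Finset.Ico (J+1) r,
          ((p:ℝ) ^ (a k - a i + 1) - (p:ℝ) ^ (a k - a i)) := by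
    rw [hr2, Finset.sum_product]
    apply Finset.sum_congr rfl
    intro k hk
    apply Finset.sum_congr rfl
    intro i hi
    simp only [hBdef, Finset.mem_Icc] at hk
    simp only [Finset.mem_Ico] at hi
    have hki : k < i := by omega
    have h1 : b k = a k + 1 := hbin k (by simp [hBdef, Finset.mem_Icc]; omega)
    have h2 : b i = a i := hbout i (by simp [hBdef, Finset.mem_Icc]; omega)
    simp only [fpair, if_pos hki, h1, h2]
    have e : a k + 1 - a i = a k - a i + 1 := by ring
    rw [e]
  -- main estimate
  have claim1 : ∀ k ∈ B, ∑ i ∈ Finset.Ico (J+1) r,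
      ((p:ℝ) ^ (a k - a i + 1) - (p:ℝ) ^ (a k - a i))
      < (p:ℝ) ^ (a K - a (J+K+1-k)) - (p:ℝ) ^ (a K - a (J+K+1-k) - 1) := by
    intro k hk
    simp only [hBdef, Finset.mem_Icc] at hk
    set e0 : ℤ := -(((J:ℤ) - k + 1) * g) - 1 with he0
    have hak : a k = a (K+1) + ((k:ℤ) - K - 1) * g := hF1 k hk.1 hk.2
    have haJ : a J = a (K+1) + ((J:ℤ) - K - 1) * g := hF1 J (by omega) le_rfl
    have haJ1 : a (K+1) + ((J:ℤ) - K) * g + 1 ≤ a (J+1) := by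
      have hring : ((J:ℤ)-K-1)*g + g = ((J:ℤ)-K)*g := by ring
      linarith [hgapJ, haJ]
    have hik1 : K + 1 ≤ J+K+1-k := by omega
    have hik2 : J+K+1-k ≤ J := by omega
    have hai' : a (J+K+1-k) = a (K+1) + ((J:ℤ) - (k:ℤ)) * g := by
      rw [hF1 _ hik1 hik2]
      have hc : ((J+K+1-k : ℕ):ℤ) = (J:ℤ)+K+1-k := by omega
      rw [hc]
      ring
    have hgapK' : a K = a (K+1) - (g - 1) := by omega
    have hE : a K - a (J+K+1-k) = e0 + 2 := by
      rw [hgapK', hai', he0]; ring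
    have hterm : ∀ i ∈ Finset.Ico (J+1) r,
        (p:ℝ) ^ (a k - a i) ≤ (p:ℝ) ^ (e0 - ((i:ℤ) - J - 1)) := by
      intro i hi
      simp only [Finset.mem_Ico] at hi
      have hstep := adm_step hinc (J+1) (i - (J+1)) (by omega)
      have e : J+1+(i-(J+1)) = i := by omega
      rw [e] at hstep
      have hc : ((i - (J+1):ℕ):ℤ) = (i:ℤ) - J - 1 := by omega
      rw [hc] at hstep
      apply zpow_le_zpow_right₀ hP1
      have hring : ((k:ℤ) - K - 1)*g - ((J:ℤ)-K)*g = -(((J:ℤ) - k + 1)*g) := by ring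
      rw [he0]
      linarith [hak, haJ1, hstep, hring]
    have hsum2 : ∑ i ∈ Finset.Ico (J+1) r, (p:ℝ) ^ (e0 - ((i:ℤ) - J - 1))
        = (p:ℝ) ^ e0 * ∑ t ∈ Finset.range (r - (J+1)), ((p:ℝ)⁻¹) ^ t := by
      rw [Finset.sum_Ico_eq_sum_range, Finset.mul_sum]
      apply Finset.sum_congr rfl
      intro t ht
      have e : e0 - (((J+1+t:ℕ):ℤ) - J - 1) = e0 + (-(t:ℤ)) := by push_cast; ring
      rw [e, zpow_add₀ hPne, zpow_neg, zpow_natCast, ← inv_pow]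
    have hgeom := geomAux (p:ℝ) hP2 (r - (J+1))
    have hpos : (0:ℝ) < (p:ℝ) ^ e0 := zpow_pos hP0 _
    have hlt : ∑ i ∈ Finset.Ico (J+1) r, (p:ℝ) ^ (a k - a i) < (p:ℝ) ^ (e0+1) := by
      rw [zpow_add_one₀ hPne]
      calc ∑ i ∈ Finset.Ico (J+1) r, (p:ℝ) ^ (a k - a i)
          ≤ ∑ i ∈ Finset.Ico (J+1) r, (p:ℝ) ^ (e0 - ((i:ℤ) - J - 1)) :=
            Finset.sum_le_sum hterm
        _ = (p:ℝ) ^ e0 * ∑ t ∈ Finset.range (r - (J+1)), ((p:ℝ)⁻¹) ^ t := hsum2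
        _ < (p:ℝ) ^ e0 * (p:ℝ) := mul_lt_mul_of_pos_left hgeom hpos
    have hLHS : ∑ i ∈ Finset.Ico (J+1) r,
        ((p:ℝ) ^ (a k - a i + 1) - (p:ℝ) ^ (a k - a i))
        = ((p:ℝ) - 1) * ∑ i ∈ Finset.Ico (J+1) r, (p:ℝ) ^ (a k - a i) := by
      rw [Finset.mul_sum]
      apply Finset.sum_congr rfl
      intro i _
      rw [zpow_add_one₀ hPne]
      ring
    have hRHS : (p:ℝ) ^ (a K - a (J+K+1-k)) - (p:ℝ) ^ (a K - a (J+K+1-k) - 1)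
        = ((p:ℝ) - 1) * (p:ℝ) ^ (e0+1) := by
      rw [hE, show (e0+2-1 : ℤ) = e0+1 from by ring,
        show (e0+2 : ℤ) = (e0+1)+1 from by ring, zpow_add_one₀ hPne]
      ring
    rw [hLHS, hRHS]
    have hPm1 : (0:ℝ) < (p:ℝ) - 1 := by linarith
    exact mul_lt_mul_of_pos_left hlt hPm1
  have claim2 : ∑ k ∈ B, ((p:ℝ) ^ (a K - a (J+K+1-k)) - (p:ℝ) ^ (a K - a (J+K+1-k) - 1))
      = ∑ i ∈ B, ((p:ℝ) ^ (a K - a i) - (p:ℝ) ^ (a K - a i - 1)) := by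
    apply Finset.sum_nbij' (i := fun k => J+K+1-k) (j := fun i => J+K+1-i)
    · intro x hx
      simp only [hBdef, Finset.mem_Icc] at hx ⊢
      omega
    · intro x hx
      simp only [hBdef, Finset.mem_Icc] at hx ⊢
      omega
    · intro x hx
      simp only [hBdef, Finset.mem_Icc] at hx
      omega
    · intro x hx
      simp only [hBdef, Finset.mem_Icc] at hx
      omega
    · intro x hx
      rfl
  have hBne : B.Nonempty := ⟨K+1, by simp [hBdef, Finset.mem_Icc]; omega⟩
  have hfinal : ∑ x ∈ rect2, (fpair p b x - fpair p a x)
      < ∑ i ∈ B, ((p:ℝ) ^ (a K - a i) - (p:ℝ) ^ (a K - a i - 1)) := by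
    rw [hrect2, ← claim2]
    exact Finset.sum_lt_sum_of_nonempty hBne claim1
  have hcancel : ∑ i ∈ B, ((p:ℝ) ^ (a K - a i - 1) - (p:ℝ) ^ (a K - a i))
      + ∑ i ∈ B, ((p:ℝ) ^ (a K - a i) - (p:ℝ) ^ (a K - a i - 1)) = 0 := by
    rw [← Finset.sum_add_distrib]
    simp
  have hltfinal : hp p r b < hp p r a := by linarith [hkey, hbound1, hfinal, hcancel]
  exact absurd (hmin b hb) (not_le.mpr hltfinal)

def revA (s r : ℕ) (a : ℕ → ℤ) : ℕ → ℤ := fun i => (s:ℤ) - 1 - a (r - 1 - i)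

lemma hp_rev (p s r : ℕ) (a : ℕ → ℤ) : hp p r (revA s r a) = hp p r a := by
  rw [hp_eq_sum_pair, hp_eq_sum_pair]
  apply Finset.sum_nbij' (i := fun x : ℕ×ℕ => (r-1-x.2, r-1-x.1))
    (j := fun x : ℕ×ℕ => (r-1-x.2, r-1-x.1))
  · rintro ⟨k,i⟩ hx
    simp only [Finset.mem_product, Finset.mem_range] at hx ⊢
    omega
  · rintro ⟨k,i⟩ hx
    simp only [Finset.mem_product, Finset.mem_range] at hx ⊢
    omega
  · rintro ⟨k,i⟩ hx
    simp only [Finset.mem_product, Finset.mem_range] at hx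
    simp only [Prod.mk.injEq]
    omega
  · rintro ⟨k,i⟩ hx
    simp only [Finset.mem_product, Finset.mem_range] at hx
    simp only [Prod.mk.injEq]
    omega
  · rintro ⟨k,i⟩ hx
    simp only [Finset.mem_product, Finset.mem_range] at hx
    simp only [fpair, revA]
    by_cases hki : k < i
    · rw [if_pos hki, if_pos (show r-1-i < r-1-k by omega)]
      congr 1
      ring
    · rw [if_neg hki, if_neg (show ¬(r-1-i < r-1-k) by omega)]

lemma adm_rev {s r : ℕ} {a : ℕ → ℤ} (hr : 1 ≤ r) (ha : Admissible s r a) :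
    Admissible s r (revA s r a) := by
  obtain ⟨h0, h1, hinc⟩ := ha
  refine ⟨?_, ?_, ?_⟩
  · show (s:ℤ) - 1 - a (r - 1 - 0) = 0
    rw [Nat.sub_zero, h1]; ring
  · show (s:ℤ) - 1 - a (r - 1 - (r-1)) = (s:ℤ) - 1
    rw [Nat.sub_self, h0]; ring
  · intro i hi
    show (s:ℤ) - 1 - a (r - 1 - i) < (s:ℤ) - 1 - a (r - 1 - (i+1))
    have e : r - 1 - i = (r - 1 - (i+1)) + 1 := by omega
    have h2 := hinc (r - 1 - (i+1)) (by omega)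
    rw [← e] at h2
    omega

lemma min_rev {p s r : ℕ} {a : ℕ → ℤ} (hr : 1 ≤ r) (ha : IsMinimizer p s r a) :
    IsMinimizer p s r (revA s r a) := by
  obtain ⟨hadm, hmin⟩ := ha
  refine ⟨adm_rev hr hadm, ?_⟩
  intro c hc
  rw [hp_rev]
  calc hp p r a ≤ hp p r (revA s r c) := hmin _ (adm_rev hr hc)
    _ = hp p r c := hp_rev p s r c

lemma dlt_rev {s r : ℕ} (a : ℕ → ℤ) (m : ℕ) (hm : m + 2 ≤ r) :
    dlt (revA s r a) m = dlt a (r - 2 - m) := by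
  simp only [dlt, revA]
  have e1 : r - 1 - (m+1) = r - 2 - m := by omega
  have e2 : r - 1 - m = (r - 2 - m) + 1 := by omega
  rw [e1, e2]
  ring

lemma no_viol (p s r : ℕ) (hpp : p.Prime) (a : ℕ → ℤ) (ha : IsMinimizer p s r a)
    (K J : ℕ) (hKJ : K < J) (hJ : J + 1 < r) (hd : dlt a K + 2 ≤ dlt a J) : False := by
  classical
  have hex : ∃ n, ∃ K J : ℕ, K < J ∧ J + 1 < r ∧ dlt a K + 2 ≤ dlt a J ∧ J - K = n :=
    ⟨J - K, K, J, hKJ, hJ, hd, rfl⟩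
  obtain ⟨K', J', h1, h2, h3, h4⟩ := Nat.find_spec hex
  have hmid : ∀ m, K' < m → m < J' → dlt a m = dlt a K' + 1 := by
    intro m hm1 hm2
    have hu : ¬ (dlt a K' + 2 ≤ dlt a m) := by
      intro hcon
      have hlt : m - K' < Nat.find hex := by omega
      exact Nat.find_min hex hlt ⟨K', m, hm1, by omega, hcon, rfl⟩
    have hv : ¬ (dlt a m + 2 ≤ dlt a J') := by
      intro hcon
      have hlt : J' - m < Nat.find hex := by omega
      exact Nat.find_min hex hlt ⟨m, J', hm2, h2, hcon, rfl⟩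
    omega
  exact main_case p s r hpp a ha K' J' h1 h2 h3 hmid

/-- Proposition 3.1: the delta vector of any minimizer of `h_p` over `A(s,r)` is
bivalent, i.e. any two of its entries differ by at most `1`. -/
theorem stmt8 (p s r : ℕ) (hpp : p.Prime) (hr : 3 ≤ r) (hrs : r < s)
    (a : ℕ → ℤ) (ha : IsMinimizer p s r a) :
    ∀ j < r - 1, ∀ k < r - 1, dlt a j - dlt a k ≤ 1 := by
  intro j hj k hk
  by_contra hcon
  push_neg at hcon
  have hd : dlt a k + 2 ≤ dlt a j := by omega
  have hr1 : 1 ≤ r := by omega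
  rcases lt_trichotomy k j with h | h | h
  · exact no_viol p s r hpp a ha k j h (by omega) hd
  · subst h; omega
  · have hrev := min_rev hr1 ha
    apply no_viol p s r hpp (revA s r a) hrev (r-2-k) (r-2-j) (by omega) (by omega)
    rw [dlt_rev a (r-2-k) (by omega), dlt_rev a (r-2-j) (by omega)]
    have e1 : r - 2 - (r-2-k) = k := by omega
    have e2 : r - 2 - (r-2-j) = j := by omega
    rw [e1, e2]
    exact hd
end

section
/- Let p be a prime and let 3 ≤ r < s be integers, and set q = (s-1)/(r-1). Let a ∈ A(s,r) satisfy h_p(a) = min h_p and write d = (d_1,…,d_{r-1}) = δ(a) (so d ∈ Biv(s,r)). If d_1 = [q+1] or d_{r-1} = [q+1], then d = ([q], [q+1], [q+1], …, [q+1]) or d = ([q+1], [q+1], …, [q+1], [q]). -/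
/-!
Moving one exponent `a_n` (`0 < n < r - 1`) to some `z` strictly between its neighbours changes
`h_p` by `(p^(a_{n-1} - z) - p^(-d_{n-1})) λ + (p^(z - a_{n+1}) - p^(-d_n)) ρ`, where
`λ = Σ_{k<n} p^(a_k - a_{n-1})` and `ρ = Σ_{i>n} p^(a_{n+1} - a_i)` do not depend on `a_n`; as the
gaps are positive and `p ≥ 2`, both lie in `[1, 2)`. So at a minimizer adjacent gaps differ by at
most one, and swapping `d_{n-1}` and `d_n` gives `ρ ≤ λ` if `d_n < d_{n-1}`, `λ ≤ ρ` if
`d_{n-1} < d_n`.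

Suppose `d_0 = m + 1` and `d_n`, `n ≤ r - 3`, is the first gap below `m + 1`, and put
`K = p^(-m-1)`. Then `d_{n-1} = m + 1`, `d_n = m`, the earlier gaps give `λ (1 - K) < 1`, and the
swap at `a_n` gives `ρ ≤ λ`. If `d_{n+1} ≤ m` then `ρ ≥ 1 + p^(-m)`, too large. If
`d_{n+1} = m + 1` then `ρ = 1 + K ρ'` with `ρ'` the right sum at `a_{n+1}`, and the swap at
`a_{n+1}` gives `1 + K λ ≤ ρ'`; together these force `λ (1 - K) ≥ 1`. Hence all gaps but the last are
`≥ m + 1` and the last is `≥ m`; since they sum to `s - 1 < (r - 1)(m + 1)` for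
`m = ⌊(s-1)/(r-1)⌋`, all these bounds are equalities. The case `d_{r-2} = m + 1` is the mirror
image under `i ↦ r - 1 - i`.
-/

open Finset

variable {p r s t : ℕ} {a : ℕ → ℤ}

theorem Admissible.dlt_pos (hA : Admissible s r a) {j : ℕ} (hj : j + 1 < r) : 0 < dlt a j := by
  have := hA.2.2 j hj
  unfold dlt
  omega

theorem Admissible.sum_dlt (hA : Admissible s r a) :
    ∑ j ∈ range (r - 1), dlt a j = (s : ℤ) - 1 := by
  simp only [dlt]
  rw [sum_range_sub, hA.1, hA.2.1, sub_zero]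

theorem Admissible.update (hA : Admissible s r a) (ht : t + 3 ≤ r) {z : ℤ}
    (hz : a t < z) (hz' : z < a (t + 2)) : Admissible s r (Function.update a (t + 1) z) := by
  obtain ⟨h0, hlast, hmono⟩ := hA
  refine ⟨by rwa [Function.update_of_ne (by omega)], by rwa [Function.update_of_ne (by omega)],
    fun i hi => ?_⟩
  rcases lt_trichotomy i t with hit | rfl | hit
  · rw [Function.update_of_ne (by omega), Function.update_of_ne (by omega)]
    exact hmono i hi
  · rwa [Function.update_self, Function.update_of_ne (by omega)]
  rcases Nat.lt_or_ge (t + 1) i with hit' | hit'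
  · rw [Function.update_of_ne (by omega), Function.update_of_ne (by omega)]
    exact hmono i hi
  · obtain rfl : i = t + 1 := by omega
    rwa [Function.update_self, Function.update_of_ne (by omega)]

def reflect (s r : ℕ) (a : ℕ → ℤ) (i : ℕ) : ℤ := (s : ℤ) - 1 - a (r - 1 - i)

theorem dlt_reflect {j : ℕ} (hj : j + 2 ≤ r) : dlt (reflect s r a) j = dlt a (r - 2 - j) := by
  unfold dlt reflect
  rw [show r - 1 - j = r - 2 - j + 1 by omega, show r - 1 - (j + 1) = r - 2 - j by omega]
  ring

theorem Admissible.reflect (hA : Admissible s r a) : Admissible s r (reflect s r a) := by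
  obtain ⟨h0, hlast, hmono⟩ := hA
  refine ⟨by simp [_root_.reflect, hlast], by simp [_root_.reflect, h0], fun i hi => ?_⟩
  have := hmono (r - 1 - (i + 1)) (by omega)
  unfold _root_.reflect
  rw [show r - 1 - i = r - 1 - (i + 1) + 1 by omega]
  omega

theorem hp_reflect : hp p r (reflect s r a) = hp p r a := by
  unfold hp
  rw [← sum_product', ← sum_product', ← sum_filter, ← sum_filter]
  refine sum_nbij' (fun z => (r - 1 - z.2, r - 1 - z.1)) (fun z => (r - 1 - z.2, r - 1 - z.1))
    ?_ ?_ ?_ ?_ ?_ <;> intro z hz <;>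
    simp only [mem_product, mem_range, mem_filter] at hz ⊢
  · omega
  · omega
  · ext <;> simp <;> omega
  · ext <;> simp <;> omega
  · unfold _root_.reflect
    congr 1
    ring

theorem IsMinimizer.reflect (hm : IsMinimizer p s r a) : IsMinimizer p s r (reflect s r a) :=
  ⟨hm.1.reflect, fun b hb => by
    rw [hp_reflect]
    exact (hm.2 _ hb.reflect).trans_eq hp_reflect⟩

/-- The terms of `hp` that involve `a (t + 1)` are
`p ^ (a t - a (t + 1)) * leftSum p a t + p ^ (a (t + 1) - a (t + 2)) * rightSum p r a (t + 2)`. -/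
noncomputable def leftSum (p : ℕ) (a : ℕ → ℤ) (t : ℕ) : ℝ :=
  ∑ k ∈ range (t + 1), (p : ℝ) ^ (a k - a t)

noncomputable def rightSum (p r : ℕ) (a : ℕ → ℤ) (t : ℕ) : ℝ :=
  ∑ i ∈ Ico t r, (p : ℝ) ^ (a t - a i)

theorem one_le_leftSum : 1 ≤ leftSum p a t := by
  simpa [leftSum] using
    single_le_sum (f := fun k => (p : ℝ) ^ (a k - a t)) (fun k _ => by positivity)
    (self_mem_range_succ t)

theorem one_le_rightSum (ht : t < r) : 1 ≤ rightSum p r a t := by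
  simpa [rightSum] using
    single_le_sum (f := fun i => (p : ℝ) ^ (a t - a i)) (fun i _ => by positivity)
    (left_mem_Ico.2 ht)

theorem sum_range_zpow_eq_mul_leftSum (hp0 : (p : ℝ) ≠ 0) (c : ℕ → ℤ) (t : ℕ) :
    ∑ k ∈ range (t + 1), (p : ℝ) ^ (c k - c (t + 1)) =
      (p : ℝ) ^ (c t - c (t + 1)) * leftSum p c t := by
  rw [leftSum, mul_sum]
  refine sum_congr rfl fun k _ => ?_
  rw [← zpow_add₀ hp0]
  congr 1
  ring

theorem sum_Ico_zpow_eq_mul_rightSum (hp0 : (p : ℝ) ≠ 0) (c : ℕ → ℤ) (t : ℕ) :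
    ∑ i ∈ Ico (t + 1) r, (p : ℝ) ^ (c t - c i) =
      (p : ℝ) ^ (c t - c (t + 1)) * rightSum p r c (t + 1) := by
  rw [rightSum, mul_sum]
  refine sum_congr rfl fun i _ => ?_
  rw [← zpow_add₀ hp0]
  congr 1
  ring

theorem leftSum_zero : leftSum p a 0 = 1 := by
  simp [leftSum]

theorem leftSum_succ (hp0 : (p : ℝ) ≠ 0) (t : ℕ) :
    leftSum p a (t + 1) = 1 + (p : ℝ) ^ (-dlt a t) * leftSum p a t := by
  rw [leftSum, sum_range_succ, sub_self, zpow_zero, sum_range_zpow_eq_mul_leftSum hp0, dlt,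
    neg_sub, add_comm]

theorem rightSum_eq (hp0 : (p : ℝ) ≠ 0) (ht : t + 1 < r) :
    rightSum p r a t = 1 + (p : ℝ) ^ (-dlt a t) * rightSum p r a (t + 1) := by
  rw [rightSum, sum_eq_sum_Ico_succ_bot (by omega), sub_self, zpow_zero,
    sum_Ico_zpow_eq_mul_rightSum hp0, dlt, neg_sub]

theorem leftSum_mul_one_sub_lt_one (hp1 : 1 ≤ (p : ℝ)) (g : ℤ) :
    ∀ t, (∀ j < t, g ≤ dlt a j) → leftSum p a t * (1 - (p : ℝ) ^ (-g)) < 1 := by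
  have hu : 0 < (p : ℝ) ^ (-g) := zpow_pos (by linarith) _
  intro t
  induction t with
  | zero => intro _; rw [leftSum_zero]; linarith
  | succ t ih =>
    intro hgap
    have hw : (p : ℝ) ^ (-dlt a t) ≤ (p : ℝ) ^ (-g) :=
      zpow_le_zpow_right₀ hp1 (by linarith [hgap t t.lt_succ_self])
    have hS := ih fun j hj => hgap j (by omega)
    have hS1 : (1 : ℝ) ≤ leftSum p a t := one_le_leftSum
    have hw0 : 0 < (p : ℝ) ^ (-dlt a t) := zpow_pos (by linarith) _
    rw [leftSum_succ (by positivity)]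
    nlinarith [mul_lt_mul_of_pos_left hS hw0]

theorem Admissible.leftSum_lt_two (hA : Admissible s r a) (hp2 : 2 ≤ (p : ℝ)) (ht : t < r) :
    leftSum p a t < 2 := by
  have h := leftSum_mul_one_sub_lt_one (by linarith) 1 t
    fun j hj => (hA.dlt_pos (by omega) : 0 < dlt a j)
  have hinv : (p : ℝ) ^ (-1 : ℤ) ≤ 1 / 2 := by
    rw [zpow_neg_one, one_div]
    exact inv_anti₀ two_pos hp2
  nlinarith [one_le_leftSum (p := p) (a := a) (t := t)]

theorem hp_eq_add_sum_add_sum (c : ℕ → ℤ) {n : ℕ} (hn : n < r) :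
    hp p r c = ∑ k ∈ (range r).erase n, ∑ i ∈ (range r).erase n,
        (if k < i then (p : ℝ) ^ (c k - c i) else 0)
      + ∑ k ∈ range n, (p : ℝ) ^ (c k - c n) + ∑ i ∈ Ico (n + 1) r, (p : ℝ) ^ (c n - c i) := by
  have hmem : n ∈ range r := mem_range.2 hn
  have hrow : (∑ i ∈ range r, if n < i then (p : ℝ) ^ (c n - c i) else 0) =
      ∑ i ∈ Ico (n + 1) r, (p : ℝ) ^ (c n - c i) := by
    rw [← sum_filter]
    congr 1
    ext i
    simp only [mem_filter, mem_range, mem_Ico]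
    omega
  have hcol : (∑ k ∈ (range r).erase n, if k < n then (p : ℝ) ^ (c k - c n) else 0) =
      ∑ k ∈ range n, (p : ℝ) ^ (c k - c n) := by
    rw [← sum_filter]
    congr 1
    ext k
    simp only [mem_filter, mem_erase, mem_range]
    omega
  unfold hp
  rw [← sum_erase_add _ _ hmem, hrow]
  simp_rw [← sum_erase_add _ _ hmem]
  rw [sum_add_distrib, hcol]

theorem hp_update_sub (hp0 : (p : ℝ) ≠ 0) (ht : t + 3 ≤ r) (z : ℤ) :
    hp p r (Function.update a (t + 1) z) - hp p r a =
      ((p : ℝ) ^ (a t - z) - (p : ℝ) ^ (a t - a (t + 1))) * leftSum p a t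
      + ((p : ℝ) ^ (z - a (t + 2)) - (p : ℝ) ^ (a (t + 1) - a (t + 2)))
        * rightSum p r a (t + 2) := by
  set b := Function.update a (t + 1) z
  have hb : ∀ k ≠ t + 1, b k = a k := fun k hk => Function.update_of_ne hk z a
  have hbt : b (t + 1) = z := Function.update_self _ _ _
  have hoff : (∑ k ∈ (range r).erase (t + 1), ∑ i ∈ (range r).erase (t + 1),
      if k < i then (p : ℝ) ^ (b k - b i) else 0) =
      ∑ k ∈ (range r).erase (t + 1), ∑ i ∈ (range r).erase (t + 1),
      if k < i then (p : ℝ) ^ (a k - a i) else 0 :=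
    sum_congr rfl fun k hk => sum_congr rfl fun i hi => by
      rw [hb k (ne_of_mem_erase hk), hb i (ne_of_mem_erase hi)]
  have hleft : leftSum p b t = leftSum p a t :=
    sum_congr rfl fun k hk => by rw [hb k (by simp at hk; omega), hb t (by omega)]
  have hright : rightSum p r b (t + 2) = rightSum p r a (t + 2) :=
    sum_congr rfl fun i hi => by rw [hb i (by simp at hi; omega), hb (t + 2) (by omega)]
  rw [hp_eq_add_sum_add_sum b (n := t + 1) (by omega),
    hp_eq_add_sum_add_sum a (n := t + 1) (by omega), hoff, sum_range_zpow_eq_mul_leftSum hp0,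
    sum_range_zpow_eq_mul_leftSum hp0, sum_Ico_zpow_eq_mul_rightSum hp0,
    sum_Ico_zpow_eq_mul_rightSum hp0, hleft, hright,
    hb t (by omega), hb (t + 1 + 1) (by omega), hbt]
  ring

theorem IsMinimizer.redistribute (hm : IsMinimizer p s r a) (hp0 : (p : ℝ) ≠ 0) (ht : t + 3 ≤ r)
    {e f : ℤ} (he : 0 < e) (hf : 0 < f) (hef : e + f = dlt a t + dlt a (t + 1)) :
    0 ≤ ((p : ℝ) ^ (-e) - (p : ℝ) ^ (-dlt a t)) * leftSum p a t
      + ((p : ℝ) ^ (-f) - (p : ℝ) ^ (-dlt a (t + 1))) * rightSum p r a (t + 2) := by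
  simp only [dlt, show t + 1 + 1 = t + 2 from rfl] at hef ⊢
  have hmin := hm.2 _ (hm.1.update ht (z := a t + e) (by omega) (by omega))
  have key := hp_update_sub (a := a) hp0 ht (a t + e)
  rw [show a t - (a t + e) = -e by ring, show a t + e - a (t + 2) = -f by omega] at key
  rw [neg_sub, neg_sub]
  linarith

theorem IsMinimizer.rightSum_le_leftSum (hm : IsMinimizer p s r a) (hp1 : 1 < (p : ℝ))
    (ht : t + 3 ≤ r) (hd : dlt a (t + 1) < dlt a t) :
    rightSum p r a (t + 2) ≤ leftSum p a t := by
  have h := hm.redistribute (by positivity) ht (hm.1.dlt_pos (by omega))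
    (hm.1.dlt_pos (by omega)) (add_comm _ _)
  have hlt : (p : ℝ) ^ (-dlt a t) < (p : ℝ) ^ (-dlt a (t + 1)) :=
    zpow_lt_zpow_right₀ hp1 (by omega)
  nlinarith

theorem IsMinimizer.leftSum_le_rightSum (hm : IsMinimizer p s r a) (hp1 : 1 < (p : ℝ))
    (ht : t + 3 ≤ r) (hd : dlt a t < dlt a (t + 1)) :
    leftSum p a t ≤ rightSum p r a (t + 2) := by
  have h := hm.redistribute (by positivity) ht (hm.1.dlt_pos (by omega))
    (hm.1.dlt_pos (by omega)) (add_comm _ _)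
  have hlt : (p : ℝ) ^ (-dlt a (t + 1)) < (p : ℝ) ^ (-dlt a t) :=
    zpow_lt_zpow_right₀ hp1 (by omega)
  nlinarith

theorem IsMinimizer.dlt_le_dlt_succ_add_one (hm : IsMinimizer p s r a) (hp2 : 2 ≤ (p : ℝ))
    (ht : t + 3 ≤ r) : dlt a t ≤ dlt a (t + 1) + 1 := by
  by_contra! h
  have hp0 : (p : ℝ) ≠ 0 := by positivity
  have hd := hm.1.dlt_pos (j := t + 1) (by omega)
  have key := hm.redistribute hp0 ht (e := dlt a t - 1) (f := dlt a (t + 1) + 1)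
    (by omega) (by omega) (by ring)
  set c := (p : ℝ) ^ (-dlt a t)
  set w := (p : ℝ) ^ (-(dlt a (t + 1) + 1))
  set L := leftSum p a t
  set R := rightSum p r a (t + 2)
  rw [show -(dlt a t - 1) = 1 + -dlt a t by ring, zpow_add₀ hp0, zpow_one,
    show -dlt a (t + 1) = 1 + -(dlt a (t + 1) + 1) by ring, zpow_add₀ hp0, zpow_one] at key
  have hc : 0 < c := by positivity
  have hw : 0 < w := by positivity
  have hcw : p * c ≤ w := by
    rw [← zpow_one_add₀ hp0]
    exact zpow_le_zpow_right₀ (by linarith) (by omega)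
  have hL : L < 2 := hm.1.leftSum_lt_two hp2 (by omega)
  have hR : 1 ≤ R := one_le_rightSum (by omega)
  -- `key` reads `0 ≤ (p - 1) * (c * L - w * R)`
  have hwc : w ≤ c * L := by nlinarith [mul_le_mul_of_nonneg_left hR hw.le]
  nlinarith

theorem IsMinimizer.dlt_succ_le_dlt_add_one (hm : IsMinimizer p s r a) (hp2 : 2 ≤ (p : ℝ))
    (ht : t + 3 ≤ r) : dlt a (t + 1) ≤ dlt a t + 1 := by
  have h := hm.reflect.dlt_le_dlt_succ_add_one hp2 (t := r - 3 - t) (by omega)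
  rwa [dlt_reflect (by omega), dlt_reflect (by omega), show r - 2 - (r - 3 - t) = t + 1 by omega,
    show r - 2 - (r - 3 - t + 1) = t by omega] at h

theorem one_le_one_add_zpow_mul_one_sub_zpow (hp2 : 2 ≤ (p : ℝ)) {m : ℤ} (hm : 0 ≤ m) :
    1 ≤ (1 + (p : ℝ) ^ (-m)) * (1 - (p : ℝ) ^ (-(m + 1))) := by
  have hp0 : (p : ℝ) ≠ 0 := by positivity
  have hK : 0 < (p : ℝ) ^ (-(m + 1)) := by positivity
  have hu1 : (p : ℝ) ^ (-m) ≤ 1 := zpow_le_one_of_nonpos₀ (by linarith) (by omega)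
  have huK : (p : ℝ) ^ (-m) = p * (p : ℝ) ^ (-(m + 1)) := by
    rw [← zpow_one_add₀ hp0]
    ring_nf
  rw [huK] at hu1 ⊢
  nlinarith [mul_nonneg hK.le (show (0 : ℝ) ≤ p - 1 - p * (p : ℝ) ^ (-(m + 1)) by linarith)]

theorem one_le_mul_one_sub_of_one_add_mul_le {A B K : ℝ} (hK : 0 ≤ K)
    (hA : 1 + K * B ≤ A) (hB : 1 + K * A ≤ B) : 1 ≤ A * (1 - K) := by
  nlinarith [mul_le_mul_of_nonneg_left hB hK]

theorem IsMinimizer.le_dlt_succ (hm : IsMinimizer p s r a) (hp2 : 2 ≤ (p : ℝ)) {i : ℕ}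
    (hi : i + 4 ≤ r) {m : ℤ} (hpre : ∀ j ≤ i, m + 1 ≤ dlt a j) : m + 1 ≤ dlt a (i + 1) := by
  by_contra! hlt
  have hp1 : (1 : ℝ) < p := by linarith
  have hp0 : (p : ℝ) ≠ 0 := by positivity
  have hdi : dlt a i = m + 1 := by
    have := hm.dlt_le_dlt_succ_add_one hp2 (t := i) (by omega)
    have := hpre i le_rfl
    omega
  have hdi' : dlt a (i + 1) = m := by
    have := hm.dlt_le_dlt_succ_add_one hp2 (t := i) (by omega)
    omega
  have hm0 : 0 ≤ m := by
    have := hm.1.dlt_pos (j := i + 1) (by omega)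
    omega
  set A := leftSum p a i
  set B := rightSum p r a (i + 3)
  set K := (p : ℝ) ^ (-(m + 1))
  have hK : 0 < K := by positivity
  have hA : A * (1 - K) < 1 :=
    leftSum_mul_one_sub_lt_one hp1.le (m + 1) i fun j hj => hpre j hj.le
  have hdesc : rightSum p r a (i + 2) ≤ A := hm.rightSum_le_leftSum hp1 (by omega) (by omega)
  have hρ : rightSum p r a (i + 2) = 1 + (p : ℝ) ^ (-dlt a (i + 2)) * B :=
    rightSum_eq hp0 (by omega)
  have hB : 1 ≤ B := one_le_rightSum (by omega)
  have hup : dlt a (i + 2) ≤ dlt a (i + 1) + 1 := hm.dlt_succ_le_dlt_add_one hp2 (by omega)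
  rcases (show dlt a (i + 2) ≤ m ∨ dlt a (i + 2) = m + 1 by omega) with h | h
  · have hu : (p : ℝ) ^ (-m) ≤ (p : ℝ) ^ (-dlt a (i + 2)) := zpow_le_zpow_right₀ hp1.le (by omega)
    have hA_ge : 1 + (p : ℝ) ^ (-m) ≤ A := by nlinarith [mul_le_mul hu hB zero_le_one (by positivity)]
    have hprod : 1 ≤ (1 + (p : ℝ) ^ (-m)) * (1 - K) := one_le_one_add_zpow_mul_one_sub_zpow hp2 hm0
    have hK1 : K < 1 := zpow_lt_one_of_neg₀ hp1 (by omega)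
    nlinarith [mul_le_mul_of_nonneg_right hA_ge (by linarith : (0 : ℝ) ≤ 1 - K)]
  · have hasc : leftSum p a (i + 1) ≤ B :=
      hm.leftSum_le_rightSum hp1 (by omega) (show dlt a (i + 1) < dlt a (i + 2) by omega)
    rw [leftSum_succ hp0, hdi] at hasc
    rw [h] at hρ
    have := one_le_mul_one_sub_of_one_add_mul_le hK.le (hρ ▸ hdesc) hasc
    linarith

theorem IsMinimizer.le_dlt_of_dlt_zero (hm : IsMinimizer p s r a) (hp2 : 2 ≤ (p : ℝ)) {m : ℤ}
    (h0 : dlt a 0 = m + 1) : ∀ i, i + 3 ≤ r → m + 1 ≤ dlt a i := by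
  intro i
  induction i using Nat.strong_induction_on with
  | _ i ih =>
    intro hi
    rcases i with _ | i
    · exact h0.ge
    · exact hm.le_dlt_succ hp2 (by omega) fun j hj => ih j (by omega) (by omega)

theorem IsMinimizer.dlt_eq_of_dlt_zero (hm : IsMinimizer p s r a) (hp2 : 2 ≤ (p : ℝ))
    (hr : 3 ≤ r) {m : ℤ} (hs : (s : ℤ) - 1 < ((r : ℤ) - 1) * (m + 1)) (h0 : dlt a 0 = m + 1) :
    ∀ j < r - 1, dlt a j = if j = r - 2 then m else m + 1 := by
  have hE := hm.le_dlt_of_dlt_zero hp2 h0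
  have hle : ∀ j ∈ range (r - 1), (if j = r - 2 then m else m + 1) ≤ dlt a j := by
    intro j hj
    rw [mem_range] at hj
    split_ifs with h
    · have h1 := hm.dlt_le_dlt_succ_add_one hp2 (t := r - 3) (by omega)
      have h2 := hE (r - 3) (by omega)
      rw [show r - 3 + 1 = j by omega] at h1
      omega
    · exact hE j (by omega)
  have htarget : ∑ j ∈ range (r - 1), (if j = r - 2 then m else m + 1) =
      ((r : ℤ) - 1) * (m + 1) - 1 := by
    rw [show r - 1 = r - 2 + 1 by omega, sum_range_succ, if_pos rfl,
      sum_congr rfl fun j hj => if_neg (by rw [mem_range] at hj; omega), sum_const, card_range,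
      nsmul_eq_mul, Nat.cast_sub (by omega)]
    push_cast
    ring
  have heq := (sum_eq_sum_iff_of_le hle).1
    (le_antisymm (sum_le_sum hle) (by rw [hm.1.sum_dlt, htarget]; omega))
  exact fun j hj => (heq j (mem_range.2 hj)).symm

theorem stmt9_general (p s r : ℕ) (hpp : p.Prime) (hr : 3 ≤ r)
    (fq : ℤ) (hfq : fq = (((s - 1) / (r - 1) : ℕ) : ℤ))
    (a : ℕ → ℤ) (ha : IsMinimizer p s r a)
    (hend : dlt a 0 = fq + 1 ∨ dlt a (r - 2) = fq + 1) :
    (∀ j < r - 1, dlt a j = if j = 0 then fq else fq + 1) ∨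
    (∀ j < r - 1, dlt a j = if j = r - 2 then fq else fq + 1) := by
  have hp2 : (2 : ℝ) ≤ p := by exact_mod_cast hpp.two_le
  have hs : (s : ℤ) - 1 < ((r : ℤ) - 1) * (fq + 1) := by
    have h : ((s - 1 : ℕ) : ℤ) < ((r - 1 : ℕ) : ℤ) * (fq + 1) := by
      rw [hfq]
      exact_mod_cast Nat.lt_mul_div_succ (s - 1) (show 0 < r - 1 by omega)
    rw [Nat.cast_sub (by omega : 1 ≤ r)] at h
    push_cast at h
    omega
  rcases hend with h0 | h0
  · exact Or.inr (ha.dlt_eq_of_dlt_zero hp2 hr hs h0)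
  · refine Or.inl fun j hj => ?_
    have h := ha.reflect.dlt_eq_of_dlt_zero hp2 hr hs (by rwa [dlt_reflect (by omega)])
      (r - 2 - j) (by omega)
    rw [dlt_reflect (by omega), show r - 2 - (r - 2 - j) = j by omega] at h
    rw [h]
    split_ifs <;> omega

/-- Proposition 3.2: let `a` be a minimizer of `h_p` over `A(s,r)` and `d = δ(a)`.
If `d_1 = [q+1]` or `d_{r-1} = [q+1]` (with `[q] = ⌊(s-1)/(r-1)⌋`, `[q+1] = [q]+1`),
then `d = ([q],[q+1],…,[q+1])` or `d = ([q+1],…,[q+1],[q])`. -/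
theorem stmt9 (p s r : ℕ) (hpp : p.Prime) (hr : 3 ≤ r) (hrs : r < s)
    (fq : ℤ) (hfq : fq = (((s - 1) / (r - 1) : ℕ) : ℤ))
    (a : ℕ → ℤ) (ha : IsMinimizer p s r a)
    (hend : dlt a 0 = fq + 1 ∨ dlt a (r - 2) = fq + 1) :
    (∀ j < r - 1, dlt a j = if j = 0 then fq else fq + 1) ∨
    (∀ j < r - 1, dlt a j = if j = r - 2 then fq else fq + 1) :=
  stmt9_general p s r hpp hr fq hfq a ha hend
end
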